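/- arXiv:2601.18663 — 11 statements merged into one kernel-verified Lean document; each statement's English description precedes it below -/
import Mathlib

section
/- Let (h_n)_{n∈ℕ} be a sequence of hypotheses and let C be the topological closure of {h_n : n ∈ ℕ}. For k ∈ ℕ let C_k := {h_n^{(k)} : n ≤ k}, where h_n^{(k)}(x) := h_n(x) for x < k and h_n^{(k)}(x) := false for x ≥ k. Then VCdim(C) = sup_{k∈ℕ} VCdim(C_k) in ℕ ∪ {∞}. -/
/-- A hypothesis is a function `ℕ → Bool`; the space `ℕ → Bool` carries the
product topology (`Bool` discrete), so it is homeomorphic to Cantor space. -/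
abbrev Hyp := ℕ → Bool

/-- A finite set `A ⊆ ℕ` is shattered by `C` if every function `g : ℕ → Bool`
agrees on `A` with some `h ∈ C`. -/
def Shatters (C : Set Hyp) (A : Finset ℕ) : Prop :=
  ∀ g : ℕ → Bool, ∃ h ∈ C, ∀ x ∈ A, h x = g x

/-- The VC dimension of a concept class, in `ℕ ∪ {∞}`. -/
noncomputable def VCdim (C : Set Hyp) : ℕ∞ :=
  ⨆ (A : Finset ℕ) (_ : Shatters C A), (A.card : ℕ∞)

lemma mem_closure_agree (h : ℕ → Hyp) (f : Hyp) (hf : f ∈ closure (Set.range h))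
    (A : Finset ℕ) : ∃ n, ∀ x ∈ A, h n x = f x := by
  have hU : IsOpen {g : Hyp | ∀ x ∈ A, g x = f x} := by
    have heq : {g : Hyp | ∀ x ∈ A, g x = f x}
        = ⋂ x ∈ A, (fun g : Hyp => g x) ⁻¹' {f x} := by
      ext g; simp [Set.mem_iInter]
    rw [heq]
    exact isOpen_biInter_finset fun x _ =>
      (continuous_apply x).isOpen_preimage _ (isOpen_discrete _)
  obtain ⟨g, hg, n, rfl⟩ := mem_closure_iff.mp hf _ hU (by simp)
  exact ⟨n, hg⟩

/-- If `C` is the closure of `{hₙ : n ∈ ℕ}` and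
`C_k = {hₙ|_k·0̂ : n ≤ k}` (prefixes of length `k` padded with `false`),
then `VCdim C = sup_k VCdim C_k` in `ℕ ∪ {∞}`. -/
theorem vcdim_closure_eq_sup_vcdim_truncations (h : ℕ → Hyp)
    (C : Set Hyp) (hC : C = closure (Set.range h))
    (Ck : ℕ → Set Hyp)
    (hCk : ∀ k, Ck k =
      {g : Hyp | ∃ n ≤ k, g = fun x => if x < k then h n x else false}) :
    VCdim C = ⨆ k : ℕ, VCdim (Ck k) := by
  classical
  apply le_antisymm
  · refine iSup₂_le fun A hA => ?_
    have key : ∀ v : (↥A → Bool), ∃ n, ∀ x (hx : x ∈ A), h n x = v ⟨x, hx⟩ := by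
      intro v
      obtain ⟨f, hfC, hf⟩ := hA (fun x => if hx : x ∈ A then v ⟨x, hx⟩ else false)
      obtain ⟨n, hn⟩ := mem_closure_agree h f (hC ▸ hfC) A
      exact ⟨n, fun x hx => by rw [hn x hx, hf x hx]; simp [hx]⟩
    choose nv hnv using key
    set k := (Finset.univ.sup nv) ⊔ ((A.sup id) + 1) with hk
    have hAk : ∀ x ∈ A, x < k := fun x hx =>
      lt_of_le_of_lt (Finset.le_sup (f := id) hx)
        (lt_of_lt_of_le (Nat.lt_succ_self _) (le_max_right _ _))
    have hsh : Shatters (Ck k) A := by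
      intro g
      set v : ↥A → Bool := fun x => g x with hv
      refine ⟨fun x => if x < k then h (nv v) x else false, ?_, ?_⟩
      · rw [hCk]
        exact ⟨nv v, le_trans (Finset.le_sup (Finset.mem_univ v)) (le_max_left _ _), rfl⟩
      · intro x hx
        simp only [hAk x hx, if_true]
        exact hnv v x hx
    calc (A.card : ℕ∞) ≤ VCdim (Ck k) := le_iSup₂_of_le A hsh le_rfl
      _ ≤ ⨆ k : ℕ, VCdim (Ck k) := le_iSup (fun k => VCdim (Ck k)) k
  · refine iSup_le fun k => iSup₂_le fun A hA => ?_
    have hsub : ∀ x ∈ A, x < k := by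
      intro x hx
      by_contra hxk
      obtain ⟨f, hfC, hf⟩ := hA (fun _ => true)
      rw [hCk] at hfC
      obtain ⟨n, hn, rfl⟩ := hfC
      have := hf x hx
      simp [hxk] at this
    have hsh : Shatters C A := by
      intro g
      obtain ⟨f, hfC, hf⟩ := hA g
      rw [hCk] at hfC
      obtain ⟨n, hn, rfl⟩ := hfC
      refine ⟨h n, hC ▸ subset_closure ⟨n, rfl⟩, fun x hx => ?_⟩
      have := hf x hx
      simpa [hsub x hx] using this
    exact le_iSup₂_of_le A hsh le_rfl
end

section
/- Let C₀ and C₁ be nonempty concept classes of functions ℕ → Bool with finite VC dimensions d₀ = VCdim(C₀) and d₁ = VCdim(C₁). Then the interleaved class ⟨C₀,C₁⟩ satisfies VCdim(⟨C₀,C₁⟩) = d₀ + d₁. -/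
/-- The interleaving `⟨p,q⟩` with `⟨p,q⟩(2n) = p(n)` and `⟨p,q⟩(2n+1) = q(n)`. -/
def interleave (p q : Hyp) : Hyp :=
  fun n => if n % 2 = 0 then p (n / 2) else q (n / 2)

lemma shatters_card_le {C : Set Hyp} {d : ℕ} (hd : VCdim C = (d : ℕ∞))
    {A : Finset ℕ} (hA : Shatters C A) : A.card ≤ d := by
  have h : (A.card : ℕ∞) ≤ (d : ℕ∞) := by
    rw [← hd]
    exact le_iSup₂ (f := fun (A : Finset ℕ) (_ : Shatters C A) => (A.card : ℕ∞)) A hA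
  exact_mod_cast h

lemma exists_shattered {C : Set Hyp} (hC : C.Nonempty) {d : ℕ} (hd : VCdim C = (d : ℕ∞)) :
    ∃ A : Finset ℕ, Shatters C A ∧ A.card = d := by
  cases d with
  | zero =>
    obtain ⟨h, hh⟩ := hC
    exact ⟨∅, fun g => ⟨h, hh, by simp⟩, rfl⟩
  | succ n =>
    have hlt : ((n : ℕ∞)) < VCdim C := by
      rw [hd]; exact_mod_cast Nat.lt_succ_self n
    rw [VCdim] at hlt
    simp only [lt_iSup_iff] at hlt
    obtain ⟨A, hA, hAlt⟩ := hlt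
    have h1 : A.card ≤ n + 1 := shatters_card_le hd hA
    have h2 : n < A.card := by exact_mod_cast hAlt
    exact ⟨A, hA, by omega⟩

/-- For nonempty classes `C₀, C₁` of finite VC dimensions `d₀, d₁`,
the interleaved class `⟨C₀,C₁⟩` has VC dimension `d₀ + d₁`. -/
theorem vcdim_interleave (C₀ C₁ : Set Hyp) (h₀ : C₀.Nonempty) (h₁ : C₁.Nonempty)
    (d₀ d₁ : ℕ) (hd₀ : VCdim C₀ = (d₀ : ℕ∞)) (hd₁ : VCdim C₁ = (d₁ : ℕ∞)) :
    VCdim (Set.image2 interleave C₀ C₁) = ((d₀ + d₁ : ℕ) : ℕ∞) := by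
  apply le_antisymm
  · -- upper bound
    apply iSup₂_le
    intro B hB
    have key : B.card ≤ d₀ + d₁ := by
      set E := B.filter (fun n => n % 2 = 0) with hE
      set O := B.filter (fun n => ¬ n % 2 = 0) with hO
      have hcard : E.card + O.card = B.card :=
        Finset.card_filter_add_card_filter_not (p := fun n => n % 2 = 0)
      set A₀ := E.image (· / 2) with hA₀
      set A₁ := O.image (· / 2) with hA₁
      have hcA₀ : A₀.card = E.card := by
        apply Finset.card_image_of_injOn
        intro a ha b hb hab
        have ha2 : a % 2 = 0 := by simpa using (Finset.mem_filter.mp ha).2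
        have hb2 : b % 2 = 0 := by simpa using (Finset.mem_filter.mp hb).2
        dsimp only at hab
        omega
      have hcA₁ : A₁.card = O.card := by
        apply Finset.card_image_of_injOn
        intro a ha b hb hab
        have ha2 : ¬ a % 2 = 0 := by simpa using (Finset.mem_filter.mp ha).2
        have hb2 : ¬ b % 2 = 0 := by simpa using (Finset.mem_filter.mp hb).2
        dsimp only at hab
        omega
      have hs₀ : Shatters C₀ A₀ := by
        intro g
        obtain ⟨h, hmem, hagree⟩ := hB (fun n => g (n / 2))
        obtain ⟨p, hp, q, hq, rfl⟩ := hmem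
        refine ⟨p, hp, ?_⟩
        intro x hx
        simp only [hA₀, Finset.mem_image] at hx
        obtain ⟨n, hn, rfl⟩ := hx
        simp only [hE, Finset.mem_filter] at hn
        have := hagree n hn.1
        simpa [interleave, hn.2] using this
      have hs₁ : Shatters C₁ A₁ := by
        intro g
        obtain ⟨h, hmem, hagree⟩ := hB (fun n => g (n / 2))
        obtain ⟨p, hp, q, hq, rfl⟩ := hmem
        refine ⟨q, hq, ?_⟩
        intro x hx
        simp only [hA₁, Finset.mem_image] at hx
        obtain ⟨n, hn, rfl⟩ := hx
        simp only [hO, Finset.mem_filter] at hn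
        have := hagree n hn.1
        simpa [interleave, hn.2] using this
      have l₀ := shatters_card_le hd₀ hs₀
      have l₁ := shatters_card_le hd₁ hs₁
      omega
    exact_mod_cast key
  · -- lower bound
    obtain ⟨A₀, hs₀, hc₀⟩ := exists_shattered h₀ hd₀
    obtain ⟨A₁, hs₁, hc₁⟩ := exists_shattered h₁ hd₁
    set B := A₀.image (fun n => 2 * n) ∪ A₁.image (fun n => 2 * n + 1) with hBdef
    have hdisj : Disjoint (A₀.image (fun n => 2 * n)) (A₁.image (fun n => 2 * n + 1)) := by
      simp only [Finset.disjoint_left, Finset.mem_image]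
      rintro a ⟨n, _, rfl⟩ ⟨m, _, h⟩
      omega
    have hcB : B.card = d₀ + d₁ := by
      rw [hBdef, Finset.card_union_of_disjoint hdisj,
        Finset.card_image_of_injective _ (fun a b => by omega),
        Finset.card_image_of_injective _ (fun a b => by omega), hc₀, hc₁]
    have hsB : Shatters (Set.image2 interleave C₀ C₁) B := by
      intro g
      obtain ⟨p, hp, hpag⟩ := hs₀ (fun n => g (2 * n))
      obtain ⟨q, hq, hqag⟩ := hs₁ (fun n => g (2 * n + 1))
      refine ⟨interleave p q, Set.mem_image2_of_mem hp hq, ?_⟩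
      intro x hx
      simp only [hBdef, Finset.mem_union, Finset.mem_image] at hx
      rcases hx with ⟨n, hn, rfl⟩ | ⟨n, hn, rfl⟩
      · have h2 : 2 * n % 2 = 0 := by omega
        have h3 : 2 * n / 2 = n := by omega
        simpa [interleave, h2, h3] using hpag n hn
      · have h2 : ¬ (2 * n + 1) % 2 = 0 := by omega
        have h3 : (2 * n + 1) / 2 = n := by omega
        simpa [interleave, h2, h3] using hqag n hn
    calc ((d₀ + d₁ : ℕ) : ℕ∞) = (B.card : ℕ∞) := by rw [hcB]
      _ ≤ _ := le_iSup₂ (f := fun (A : Finset ℕ)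
          (_ : Shatters (Set.image2 interleave C₀ C₁) A) => (A.card : ℕ∞)) B hsB
end

section
/- Let C₀ and C₁ be nonempty concept classes of functions ℕ → Bool and suppose the learner A improperly PAC learns the interleaved class ⟨C₀,C₁⟩ with sample complexity m. For i ∈ {0,1} define the learner A_i by A_i((x₁,y₁),…,(xₙ,yₙ))(x) := A((2x₁+i,y₁),…,(2xₙ+i,yₙ))(2x+i). Then A_i improperly PAC learns C_i with the same sample complexity m. Moreover, if range(A) ⊆ ⟨C₀,C₁⟩, then range(A_i) ⊆ C_i, so A_i PAC learns C_i relative to C_i (i.e., properly) with m. -/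
/-- A sample is a finite sequence of pairs `(x, y) ∈ ℕ × Bool`. -/
abbrev Sample := List (ℕ × Bool)

/-- A learner maps samples to hypotheses. -/
abbrev Learner := Sample → Hyp

/-- The Cantor pairing function `⟨i,j⟩ = (i+j)(i+j+1)/2 + j`. -/
def cpair (i j : ℕ) : ℕ := (i + j) * (i + j + 1) / 2 + j

/-- A probability distribution on `ℕ × Bool`: nonnegative values summing to `1`. -/
def IsDistr (D : ℕ × Bool → ℝ) : Prop := (∀ p, 0 ≤ D p) ∧ HasSum D 1

/-- The true error `L_𝒟(h) = 𝒟{(x,y) : h x ≠ y}`. -/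
noncomputable def trueError (D : ℕ × Bool → ℝ) (h : Hyp) : ℝ :=
  ∑' p : ℕ × Bool, if h p.1 ≠ p.2 then D p else 0

/-- The optimal true error `inf_{h ∈ C} L_𝒟(h)`. -/
noncomputable def optErr (D : ℕ × Bool → ℝ) (C : Set Hyp) : ℝ :=
  ⨅ h : C, trueError D h.val

/-- The probability `𝒟ⁿ(P)` of a set `P` of samples of size `n` under the
`n`-fold product (i.i.d.) distribution of `D`. -/
noncomputable def sampleProb (D : ℕ × Bool → ℝ) (n : ℕ)
    (P : Set (Fin n → ℕ × Bool)) : ℝ :=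
  ∑' S : Fin n → ℕ × Bool, P.indicator (fun T => ∏ i, D (T i)) S

/-- `A` PAC learns `C` relative to `H` with sample complexity `m`:
`range A ⊆ H`, and for all `i j`, `n ≥ m⟨i,j⟩` and every distribution `𝒟`,
`𝒟ⁿ{S : L_𝒟(A S) ≤ inf_{h∈C} L_𝒟(h) + 2^{-i}} > 1 - 2^{-j}`. -/
def PACLearns (C H : Set Hyp) (A : Learner) (m : ℕ → ℕ) : Prop :=
  (∀ S, A S ∈ H) ∧
  ∀ i j n : ℕ, m (cpair i j) ≤ n → ∀ D : ℕ × Bool → ℝ, IsDistr D →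
    sampleProb D n
        {S | trueError D (A (List.ofFn S)) ≤ optErr D C + ((2 : ℝ) ^ i)⁻¹}
      > 1 - ((2 : ℝ) ^ j)⁻¹

/-- `A` improperly PAC learns `C` with `m`: PAC learning relative to all hypotheses. -/
def ImPACLearns (C : Set Hyp) (A : Learner) (m : ℕ → ℕ) : Prop :=
  PACLearns C Set.univ A m

section Aux

def emb (i : ℕ) : ℕ × Bool → ℕ × Bool := fun p => (2 * p.1 + i, p.2)

lemma emb_inj (i : ℕ) : Function.Injective (emb i) := by
  intro p q h
  simp only [emb, Prod.mk.injEq] at h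
  exact Prod.ext (by omega) h.2

noncomputable def dz (i : ℕ) (D : ℕ × Bool → ℝ) : ℕ × Bool → ℝ :=
  fun p => if p.1 % 2 = i % 2 then D (p.1 / 2, p.2) else 0

lemma dz_comp (i : ℕ) (hi : i < 2) (D : ℕ × Bool → ℝ) (p : ℕ × Bool) :
    dz i D (emb i p) = D p := by
  simp only [dz, emb]
  show (if (2 * p.1 + i) % 2 = i % 2 then D ((2 * p.1 + i) / 2, p.2) else 0) = D p
  rw [if_pos (by omega)]
  congr 1
  exact Prod.ext (by simp; omega) rfl

lemma mem_range_emb (i : ℕ) (hi : i < 2) (p : ℕ × Bool) :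
    p ∈ Set.range (emb i) ↔ p.1 % 2 = i := by
  constructor
  · rintro ⟨q, rfl⟩; simp [emb]; omega
  · intro h
    exact ⟨(p.1 / 2, p.2), Prod.ext (by simp [emb]; omega) rfl⟩

lemma dz_zero (i : ℕ) (hi : i < 2) (D : ℕ × Bool → ℝ) (p : ℕ × Bool)
    (hp : p ∉ Set.range (emb i)) : dz i D p = 0 := by
  rw [mem_range_emb i hi] at hp
  simp only [dz]
  rw [if_neg (by omega)]

lemma dz_nonneg (i : ℕ) (D : ℕ × Bool → ℝ) (hD : ∀ p, 0 ≤ D p) (p : ℕ × Bool) :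
    0 ≤ dz i D p := by
  simp only [dz]; split
  · exact hD _
  · exact le_refl 0

lemma isDistr_dz (i : ℕ) (hi : i < 2) (D : ℕ × Bool → ℝ) (hD : IsDistr D) :
    IsDistr (dz i D) := by
  refine ⟨dz_nonneg i D hD.1, ?_⟩
  rw [← (emb_inj i).hasSum_iff (fun x hx => dz_zero i hi D x hx)]
  exact hD.2.congr_fun (fun p => dz_comp i hi D p)

lemma trueError_dz (i : ℕ) (hi : i < 2) (D : ℕ × Bool → ℝ) (h : Hyp) :
    trueError (dz i D) h = trueError D (fun x => h (2 * x + i)) := by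
  unfold trueError
  have hsupp : Function.support
      (fun p : ℕ × Bool => if h p.1 ≠ p.2 then dz i D p else 0) ⊆ Set.range (emb i) := by
    rw [Function.support_subset_iff']
    intro p hp
    rw [dz_zero i hi D p hp]
    simp
  refine ((emb_inj i).tsum_eq hsupp).symm.trans (tsum_congr fun p => ?_)
  simp only [emb]
  rw [show dz i D (2 * p.1 + i, p.2) = D p from dz_comp i hi D p]
  rfl

lemma interleave_comp (i : ℕ) (hi : i < 2) (p q : Hyp) :
    (fun x => interleave p q (2 * x + i)) = (if i = 0 then p else q) := by
  funext x
  interval_cases i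
  · simp only [interleave, if_pos rfl]
    rw [if_pos (by omega)]
    congr 1
    omega
  · have h1 : ¬ ((2 * x + 1) % 2 = 0) := by omega
    simp only [interleave, if_neg h1, one_ne_zero, if_false]
    congr 1
    omega

lemma trueError_nonneg (D : ℕ × Bool → ℝ) (hD : ∀ p, 0 ≤ D p) (h : Hyp) :
    0 ≤ trueError D h := by
  apply tsum_nonneg
  intro p
  split
  · exact hD p
  · exact le_refl 0

lemma bddBelow_trueError (D : ℕ × Bool → ℝ) (hD : ∀ p, 0 ≤ D p) (C : Set Hyp) :
    BddBelow (Set.range fun h : C => trueError D h.val) := by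
  refine ⟨0, ?_⟩
  rintro x ⟨h, rfl⟩
  exact trueError_nonneg D hD h.val

lemma optErr_dz (i : ℕ) (hi : i < 2) (C₀ C₁ : Set Hyp)
    (h₀ : C₀.Nonempty) (h₁ : C₁.Nonempty)
    (D : ℕ × Bool → ℝ) (hD : ∀ p, 0 ≤ D p) :
    optErr (dz i D) (Set.image2 interleave C₀ C₁)
      = optErr D (if i = 0 then C₀ else C₁) := by
  haveI : Nonempty ↑(Set.image2 interleave C₀ C₁) := (h₀.image2 h₁).to_subtype
  haveI : Nonempty ↑(if i = 0 then C₀ else C₁) := by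
    split
    · exact h₀.to_subtype
    · exact h₁.to_subtype
  have key : ∀ p q : Hyp, trueError (dz i D) (interleave p q)
      = trueError D (if i = 0 then p else q) := by
    intro p q
    rw [trueError_dz i hi, interleave_comp i hi]
  have hdz := dz_nonneg i D hD
  unfold optErr
  apply le_antisymm
  · apply le_ciInf
    rintro ⟨c, hc⟩
    by_cases h0 : i = 0
    · simp only [if_pos h0] at hc
      refine ciInf_le_of_le (bddBelow_trueError _ hdz _)
        ⟨interleave c h₁.choose, Set.mem_image2_of_mem hc h₁.choose_spec⟩ ?_
      rw [key]
      simp only [if_pos h0, le_refl]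
    · simp only [if_neg h0] at hc
      refine ciInf_le_of_le (bddBelow_trueError _ hdz _)
        ⟨interleave h₀.choose c, Set.mem_image2_of_mem h₀.choose_spec hc⟩ ?_
      rw [key]
      simp only [if_neg h0, le_refl]
  · apply le_ciInf
    rintro ⟨h, p, hp, q, hq, rfl⟩
    rw [key]
    by_cases h0 : i = 0
    · exact ciInf_le_of_le (bddBelow_trueError _ hD _)
        ⟨p, by simp only [if_pos h0]; exact hp⟩
        (by simp only [if_pos h0]; exact le_refl _)
    · exact ciInf_le_of_le (bddBelow_trueError _ hD _)
        ⟨q, by simp only [if_neg h0]; exact hq⟩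
        (by simp only [if_neg h0]; exact le_refl _)

lemma sampleProb_dz (i : ℕ) (hi : i < 2) (D : ℕ × Bool → ℝ) (n : ℕ)
    (P : Set (Fin n → ℕ × Bool)) :
    sampleProb (dz i D) n P
      = sampleProb D n ((fun S k => emb i (S k)) ⁻¹' P) := by
  classical
  unfold sampleProb
  have hΦ : Function.Injective (fun (S : Fin n → ℕ × Bool) k => emb i (S k)) := by
    intro S T h
    funext k
    exact emb_inj i (congrFun h k)
  have hsupp : Function.support
      (fun T : Fin n → ℕ × Bool => P.indicator (fun T => ∏ k, dz i D (T k)) T)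
      ⊆ Set.range (fun (S : Fin n → ℕ × Bool) k => emb i (S k)) := by
    rw [Function.support_subset_iff']
    intro T hT
    have hex : ∃ k, T k ∉ Set.range (emb i) := by
      by_contra hall
      push_neg at hall
      apply hT
      refine ⟨fun k => ((T k).1 / 2, (T k).2), funext fun k => ?_⟩
      have := (mem_range_emb i hi (T k)).mp (hall k)
      exact Prod.ext (by simp [emb]; omega) rfl
    obtain ⟨k, hk⟩ := hex
    have hz : dz i D (T k) = 0 := dz_zero i hi D (T k) hk
    rw [Set.indicator_apply]
    split
    · exact Finset.prod_eq_zero (Finset.mem_univ k) hz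
    · rfl
  refine ((hΦ.tsum_eq hsupp).symm.trans (tsum_congr fun S => ?_))
  by_cases hS : S ∈ (fun (S : Fin n → ℕ × Bool) k => emb i (S k)) ⁻¹' P
  · rw [Set.indicator_of_mem hS, Set.indicator_of_mem (Set.mem_preimage.mp hS)]
    exact Finset.prod_congr rfl fun k _ => dz_comp i hi D (S k)
  · rw [Set.indicator_of_notMem hS, Set.indicator_of_notMem
      (fun h => hS (Set.mem_preimage.mpr h))]

end Aux

/-- If `A` improperly PAC learns the interleaved class `⟨C₀,C₁⟩` with sample
complexity `m`, then for `i ∈ {0,1}` the derived learner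
`A_i(S)(x) = A(((2x₁+i,y₁),…,(2xₙ+i,yₙ)))(2x+i)` improperly PAC learns `C_i`
with the same `m`; moreover if `range A ⊆ ⟨C₀,C₁⟩` then `range A_i ⊆ C_i`,
so `A_i` properly PAC learns `C_i` with `m`. -/
theorem interleave_learner_projection (C₀ C₁ : Set Hyp)
    (h₀ : C₀.Nonempty) (h₁ : C₁.Nonempty)
    (A : Learner) (m : ℕ → ℕ)
    (hA : ImPACLearns (Set.image2 interleave C₀ C₁) A m)
    (i : ℕ) (hi : i < 2)
    (Ai : Learner)
    (hAi : ∀ S : Sample, ∀ x : ℕ,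
      Ai S x = A (S.map fun p => (2 * p.1 + i, p.2)) (2 * x + i)) :
    ImPACLearns (if i = 0 then C₀ else C₁) Ai m ∧
    ((∀ S, A S ∈ Set.image2 interleave C₀ C₁) →
      (∀ S, Ai S ∈ (if i = 0 then C₀ else C₁)) ∧
      PACLearns (if i = 0 then C₀ else C₁) (if i = 0 then C₀ else C₁) Ai m) := by
  have himp : ImPACLearns (if i = 0 then C₀ else C₁) Ai m := by
    refine ⟨fun S => Set.mem_univ _, ?_⟩
    intro a j n hn D hD
    have hD' := isDistr_dz i hi D hD
    have hmain := hA.2 a j n hn (dz i D) hD'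
    rw [sampleProb_dz i hi D n] at hmain
    have hset : ((fun (S : Fin n → ℕ × Bool) k => emb i (S k)) ⁻¹'
        {S | trueError (dz i D) (A (List.ofFn S))
          ≤ optErr (dz i D) (Set.image2 interleave C₀ C₁) + ((2:ℝ) ^ a)⁻¹})
        = {S | trueError D (Ai (List.ofFn S))
            ≤ optErr D (if i = 0 then C₀ else C₁) + ((2:ℝ) ^ a)⁻¹} := by
      ext S
      simp only [Set.mem_preimage, Set.mem_setOf_eq]
      have hofn : List.ofFn (fun k => emb i (S k))
          = (List.ofFn S).map (fun p => (2 * p.1 + i, p.2)) := by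
        rw [List.map_ofFn]
        rfl
      have hAiS : Ai (List.ofFn S)
          = fun x => A (List.ofFn fun k => emb i (S k)) (2 * x + i) := by
        funext x
        rw [hAi, hofn]
      rw [optErr_dz i hi C₀ C₁ h₀ h₁ D hD.1,
        trueError_dz i hi D (A (List.ofFn fun k => emb i (S k))), ← hAiS]
    rw [hset] at hmain
    exact hmain
  refine ⟨himp, fun hrange => ?_⟩
  have hmem : ∀ S, Ai S ∈ (if i = 0 then C₀ else C₁) := by
    intro S
    obtain ⟨p, hp, q, hq, heq⟩ := hrange (S.map fun p => (2 * p.1 + i, p.2))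
    have hAS : Ai S = fun x => interleave p q (2 * x + i) := by
      funext x
      rw [hAi, ← heq]
    rw [hAS, interleave_comp i hi]
    split
    · exact hp
    · exact hq
  exact ⟨hmem, hmem, himp.2⟩
end

section
/- (No Free Lunch) For every learner A, every n ≥ 1, every k ≥ 2n and all natural numbers x₁ < ⋯ < x_k, there exists a function g : {x₁,…,x_k} → Bool such that, with 𝒟 the uniform probability distribution on the k-element set {(x₁,g(x₁)),…,(x_k,g(x_k))} ⊆ ℕ × Bool, one has 𝒟ⁿ{S of size n : L_𝒟(A(S)) ≥ 1/8} ≥ 1/7. -/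
section NFL
open Finset
open scoped Classical
variable {k : ℕ}

lemma trueError_Dg (x : Fin k → ℕ) (hx : Function.Injective x) (g : Fin k → Bool) (h : Hyp) :
    trueError (Set.indicator {p : ℕ × Bool | ∃ i, p = (x i, g i)} fun _ => (k : ℝ)⁻¹) h
      = ∑ i : Fin k, if h (x i) ≠ g i then (k:ℝ)⁻¹ else 0 := by
  classical
  set D := Set.indicator {p : ℕ × Bool | ∃ i, p = (x i, g i)} (fun _ => (k : ℝ)⁻¹) with hD
  have hinj : Function.Injective (fun i : Fin k => ((x i, g i) : ℕ × Bool)) := by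
    intro a b hab; exact hx (congrArg Prod.fst hab)
  rw [trueError, tsum_eq_sum (s := Finset.univ.image fun i => ((x i, g i) : ℕ × Bool)) ?_]
  · rw [Finset.sum_image (fun a _ b _ hab => hinj hab)]
    refine Finset.sum_congr rfl fun i _ => ?_
    by_cases hc : h (x i) ≠ g i
    · rw [if_pos hc, if_pos hc]
      exact Set.indicator_of_mem (show ((x i, g i) : ℕ × Bool) ∈ {p : ℕ × Bool | ∃ j, p = (x j, g j)} from ⟨i, rfl⟩) (fun _ => (k:ℝ)⁻¹)
    · rw [if_neg hc, if_neg hc]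
  · intro p hp
    have hnm : p ∉ {p : ℕ × Bool | ∃ i, p = (x i, g i)} := by
      rintro ⟨i, rfl⟩
      exact hp (Finset.mem_image.2 ⟨i, Finset.mem_univ _, rfl⟩)
    have : D p = 0 := Set.indicator_of_notMem hnm _
    by_cases hc : h p.1 ≠ p.2 <;> simp [hc, this]

lemma sampleProb_Dg (x : Fin k → ℕ) (hx : Function.Injective x) (g : Fin k → Bool)
    (n : ℕ) (P : Set (Fin n → ℕ × Bool)) :
    sampleProb (Set.indicator {p : ℕ × Bool | ∃ i, p = (x i, g i)} fun _ => (k : ℝ)⁻¹) n P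
      = ∑ σ : Fin n → Fin k,
          (if (fun j => ((x (σ j), g (σ j)) : ℕ × Bool)) ∈ P then ((k:ℝ)⁻¹)^n else 0) := by
  classical
  set D := Set.indicator {p : ℕ × Bool | ∃ i, p = (x i, g i)} (fun _ => (k : ℝ)⁻¹) with hD
  set E : (Fin n → Fin k) → (Fin n → ℕ × Bool) := fun σ j => (x (σ j), g (σ j)) with hE
  have hinj : Function.Injective (fun i : Fin k => ((x i, g i) : ℕ × Bool)) := by
    intro a b hab; exact hx (congrArg Prod.fst hab)
  have hEinj : Function.Injective E := by
    intro σ τ hστ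
    funext j
    exact hinj (congrFun hστ j)
  rw [sampleProb, tsum_eq_sum (s := Finset.univ.image E) ?_]
  · rw [Finset.sum_image (fun a _ b _ hab => hEinj hab)]
    refine Finset.sum_congr rfl fun σ _ => ?_
    by_cases hc : E σ ∈ P
    · rw [Set.indicator_of_mem hc, if_pos hc]
      have : ∀ j : Fin n, D (E σ j) = (k:ℝ)⁻¹ := fun j =>
        Set.indicator_of_mem (show ((x (σ j), g (σ j)) : ℕ × Bool) ∈
          {p : ℕ × Bool | ∃ i, p = (x i, g i)} from ⟨σ j, rfl⟩) (fun _ => (k:ℝ)⁻¹)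
      simp [this]
    · rw [Set.indicator_of_notMem hc, if_neg hc]
  · intro S hS
    by_cases hc : S ∈ P
    · rw [Set.indicator_of_mem hc]
      by_contra hne
      have hall : ∀ j, ∃ i, S j = (x i, g i) := by
        intro j
        by_contra hj
        have : D (S j) = 0 :=
          Set.indicator_of_notMem (show S j ∉ {p : ℕ × Bool | ∃ i, p = (x i, g i)} from hj) (fun _ => (k:ℝ)⁻¹)
        exact hne (Finset.prod_eq_zero (Finset.mem_univ j) this)
      choose σ hσ using hall
      exact hS (Finset.mem_image.2 ⟨σ, Finset.mem_univ _, by funext j; exact (hσ j).symm⟩)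
    · exact Set.indicator_of_notMem hc _

lemma flip_sum (A : Learner) (x : Fin k → ℕ) {n : ℕ} (σ : Fin n → Fin k) (i : Fin k)
    (hi : ∀ j, σ j ≠ i) :
    ∑ g : Fin k → Bool,
        (if A (List.ofFn fun j => ((x (σ j), g (σ j)) : ℕ × Bool)) (x i) ≠ g i then (1:ℝ) else 0)
      = 2 ^ k / 2 := by
  classical
  set f : (Fin k → Bool) → ℝ := fun g =>
    if A (List.ofFn fun j => ((x (σ j), g (σ j)) : ℕ × Bool)) (x i) ≠ g i then (1:ℝ) else 0
    with hf
  have hinv : Function.Involutive (fun g : Fin k → Bool => Function.update g i (!(g i))) := by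
    intro g
    funext a
    by_cases ha : a = i
    · subst ha; simp
    · simp [Function.update_of_ne ha]
  have hpair : ∀ g, f g + f (Function.update g i (!(g i))) = 1 := by
    intro g
    have hsample : (fun j => ((x (σ j), (Function.update g i (!(g i))) (σ j)) : ℕ × Bool))
        = fun j => ((x (σ j), g (σ j)) : ℕ × Bool) := by
      funext j
      rw [Function.update_of_ne (hi j)]
    simp only [hf, hsample, Function.update_self]
    cases hb : A (List.ofFn fun j => ((x (σ j), g (σ j)) : ℕ × Bool)) (x i) <;>
      cases hg : g i <;> norm_num
  have hsum2 : ∑ g : Fin k → Bool, f g = ∑ g : Fin k → Bool, f (Function.update g i (!(g i))) :=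
    (Fintype.sum_equiv hinv.toPerm _ _ (fun g => rfl)).symm
  have : 2 * ∑ g : Fin k → Bool, f g = 2 ^ k := by
    have := Finset.sum_add_distrib (s := (Finset.univ : Finset (Fin k → Bool)))
      (f := f) (g := fun g => f (Function.update g i (!(g i))))
    calc 2 * ∑ g : Fin k → Bool, f g
        = ∑ g : Fin k → Bool, f g + ∑ g : Fin k → Bool, f (Function.update g i (!(g i))) := by
          rw [← hsum2]; ring
      _ = ∑ g : Fin k → Bool, (f g + f (Function.update g i (!(g i)))) := by rw [this]
      _ = ∑ _g : Fin k → Bool, (1:ℝ) := Finset.sum_congr rfl fun g _ => hpair g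
      _ = 2 ^ k := by simp [Finset.card_univ]
  linarith

end NFL

open Finset in
open scoped Classical in
/-- No Free Lunch Theorem: for every learner `A`, every `n ≥ 1`, every `k ≥ 2n`
and all `x₁ < ⋯ < x_k`, there is `g : {x₁,…,x_k} → Bool` such that for the
uniform distribution `𝒟` on `{(x₁,g x₁),…,(x_k,g x_k)}` one has
`𝒟ⁿ{S : L_𝒟(A S) ≥ 1/8} ≥ 1/7`. -/
theorem no_free_lunch (A : Learner) (n k : ℕ) (hn : 1 ≤ n) (hk : 2 * n ≤ k)
    (x : Fin k → ℕ) (hx : StrictMono x) :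
    ∃ g : Fin k → Bool,
      sampleProb (Set.indicator {p : ℕ × Bool | ∃ i, p = (x i, g i)}
          fun _ => (k : ℝ)⁻¹) n
        {S | (1 : ℝ) / 8 ≤
          trueError (Set.indicator {p : ℕ × Bool | ∃ i, p = (x i, g i)}
            fun _ => (k : ℝ)⁻¹) (A (List.ofFn S))} ≥ 1 / 7 := by
  classical
  have hxinj : Function.Injective x := hx.injective
  have hk2 : 2 ≤ k := by omega
  have hkR : (0:ℝ) < k := by exact_mod_cast (by omega : 0 < k)
  have hkinv : (0:ℝ) ≤ (k:ℝ)⁻¹ := by positivity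
  set Dd : (Fin k → Bool) → ℕ × Bool → ℝ := fun g =>
    Set.indicator {p : ℕ × Bool | ∃ i, p = (x i, g i)} fun _ => (k : ℝ)⁻¹ with hDd
  set L : (Fin k → Bool) → (Fin n → Fin k) → ℝ := fun g σ =>
    trueError (Dd g) (A (List.ofFn fun j => ((x (σ j), g (σ j)) : ℕ × Bool))) with hLdef
  have hLeq : ∀ g σ, L g σ = ∑ i : Fin k,
      if A (List.ofFn fun j => ((x (σ j), g (σ j)) : ℕ × Bool)) (x i) ≠ g i
      then (k:ℝ)⁻¹ else 0 :=
    fun g σ => trueError_Dg x hxinj g _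
  have hL1 : ∀ g σ, L g σ ≤ 1 := by
    intro g σ
    rw [hLeq]
    calc ∑ i : Fin k,
          (if A (List.ofFn fun j => ((x (σ j), g (σ j)) : ℕ × Bool)) (x i) ≠ g i
           then (k:ℝ)⁻¹ else 0)
        ≤ ∑ _i : Fin k, (k:ℝ)⁻¹ :=
          Finset.sum_le_sum fun i _ => by split <;> simp [hkinv]
      _ = 1 := by
          rw [Finset.sum_const, Finset.card_univ, Fintype.card_fin, nsmul_eq_mul]
          field_simp
  -- averaging: some g has large expected error
  have key : ∃ g : Fin k → Bool, ((k:ℝ)^n)/4 ≤ ∑ σ : Fin n → Fin k, L g σ := by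
    by_contra hcon
    push_neg at hcon
    have htot : ∑ g : Fin k → Bool, ∑ σ : Fin n → Fin k, L g σ
        < ∑ _g : Fin k → Bool, ((k:ℝ)^n)/4 :=
      Finset.sum_lt_sum_of_nonempty Finset.univ_nonempty fun g _ => hcon g
    have hcardg : ∑ _g : Fin k → Bool, ((k:ℝ)^n)/4 = 2^k * ((k:ℝ)^n/4) := by
      rw [Finset.sum_const, Finset.card_univ, nsmul_eq_mul]
      norm_num [Fintype.card_fun]
    have hswap : ∑ g : Fin k → Bool, ∑ σ : Fin n → Fin k, L g σ
        = ∑ σ : Fin n → Fin k, ∑ i : Fin k, ∑ g : Fin k → Bool,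
            (if A (List.ofFn fun j => ((x (σ j), g (σ j)) : ℕ × Bool)) (x i) ≠ g i
             then (k:ℝ)⁻¹ else 0) := by
      rw [Finset.sum_comm]
      refine Finset.sum_congr rfl fun σ _ => ?_
      rw [← Finset.sum_comm]
      exact Finset.sum_congr rfl fun g _ => hLeq g σ
    have hperσ : ∀ σ : Fin n → Fin k, (2:ℝ)^k/4 ≤ ∑ i : Fin k, ∑ g : Fin k → Bool,
        (if A (List.ofFn fun j => ((x (σ j), g (σ j)) : ℕ × Bool)) (x i) ≠ g i
         then (k:ℝ)⁻¹ else 0) := by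
      intro σ
      set t : Fin k → ℝ := fun i => ∑ g : Fin k → Bool,
        (if A (List.ofFn fun j => ((x (σ j), g (σ j)) : ℕ × Bool)) (x i) ≠ g i
         then (k:ℝ)⁻¹ else 0) with ht
      have ht0 : ∀ i, 0 ≤ t i := fun i =>
        Finset.sum_nonneg fun g _ => by split <;> simp [hkinv]
      have hval : ∀ i ∈ Finset.univ \ Finset.image σ Finset.univ,
          t i = (k:ℝ)⁻¹ * ((2:ℝ)^k/2) := by
        intro i hi
        have hi' : ∀ j, σ j ≠ i := by
          intro j hj
          exact (Finset.mem_sdiff.1 hi).2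
            (Finset.mem_image.2 ⟨j, Finset.mem_univ _, hj⟩)
        have : t i = (k:ℝ)⁻¹ * ∑ g : Fin k → Bool,
            (if A (List.ofFn fun j => ((x (σ j), g (σ j)) : ℕ × Bool)) (x i) ≠ g i
             then (1:ℝ) else 0) := by
          rw [ht, Finset.mul_sum]
          exact Finset.sum_congr rfl fun g _ => by split <;> simp
        rw [this, flip_sum A x σ i hi']
      have hsub : ∑ i ∈ Finset.univ \ Finset.image σ Finset.univ, t i
          ≤ ∑ i : Fin k, t i :=
        Finset.sum_le_sum_of_subset_of_nonneg (Finset.sdiff_subset)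
          fun i _ _ => ht0 i
      have hcards : (k:ℝ) - n ≤ ((Finset.univ \ Finset.image σ Finset.univ).card : ℝ) := by
        have h1 : (Finset.image σ Finset.univ).card ≤ n := by
          calc (Finset.image σ Finset.univ).card ≤ (Finset.univ : Finset (Fin n)).card :=
            Finset.card_image_le
          _ = n := by simp
        have h2 : (Finset.univ \ Finset.image σ Finset.univ).card
            = k - (Finset.image σ Finset.univ).card := by
          rw [Finset.card_sdiff_of_subset (Finset.subset_univ _), Finset.card_univ, Fintype.card_fin]
        have h3 : (Finset.image σ Finset.univ).card ≤ k := by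
          calc (Finset.image σ Finset.univ).card ≤ n := h1
          _ ≤ k := by omega
        have : k ≤ (Finset.univ \ Finset.image σ Finset.univ).card + n := by omega
        have := (Nat.cast_le (α := ℝ)).2 this
        push_cast at this
        linarith
      have hsdval : ∑ i ∈ Finset.univ \ Finset.image σ Finset.univ, t i
          = ((Finset.univ \ Finset.image σ Finset.univ).card : ℝ)
              * ((k:ℝ)⁻¹ * ((2:ℝ)^k/2)) := by
        rw [Finset.sum_congr rfl hval, Finset.sum_const, nsmul_eq_mul]
      have hc0 : (0:ℝ) ≤ (k:ℝ)⁻¹ * ((2:ℝ)^k/2) := by positivity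
      have hkn : (k:ℝ)/2 ≤ (k:ℝ) - n := by
        have : (2*n : ℝ) ≤ k := by exact_mod_cast hk
        linarith
      have hstep : ((k:ℝ)/2) * ((k:ℝ)⁻¹ * ((2:ℝ)^k/2)) = (2:ℝ)^k/4 := by
        field_simp
        ring
      calc (2:ℝ)^k/4 = ((k:ℝ)/2) * ((k:ℝ)⁻¹ * ((2:ℝ)^k/2)) := hstep.symm
        _ ≤ ((k:ℝ) - n) * ((k:ℝ)⁻¹ * ((2:ℝ)^k/2)) := by
            exact mul_le_mul_of_nonneg_right hkn hc0
        _ ≤ ((Finset.univ \ Finset.image σ Finset.univ).card : ℝ)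
              * ((k:ℝ)⁻¹ * ((2:ℝ)^k/2)) := by
            exact mul_le_mul_of_nonneg_right hcards hc0
        _ = ∑ i ∈ Finset.univ \ Finset.image σ Finset.univ, t i := hsdval.symm
        _ ≤ ∑ i : Fin k, t i := hsub
    have hlow : (2:ℝ)^k * ((k:ℝ)^n/4) ≤ ∑ g : Fin k → Bool, ∑ σ : Fin n → Fin k, L g σ := by
      rw [hswap]
      calc (2:ℝ)^k * ((k:ℝ)^n/4) = (k:ℝ)^n * ((2:ℝ)^k/4) := by ring
        _ = ∑ _σ : Fin n → Fin k, ((2:ℝ)^k/4) := by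
            rw [Finset.sum_const, Finset.card_univ, nsmul_eq_mul]
            norm_num [Fintype.card_fun]
        _ ≤ _ := Finset.sum_le_sum fun σ _ => hperσ σ
    linarith
  obtain ⟨g, hg⟩ := key
  refine ⟨g, ?_⟩
  set P : Set (Fin n → ℕ × Bool) :=
    {S | (1 : ℝ) / 8 ≤ trueError (Dd g) (A (List.ofFn S))} with hP
  have hsp : sampleProb (Dd g) n P
      = ∑ σ : Fin n → Fin k,
          (if (fun j => ((x (σ j), g (σ j)) : ℕ × Bool)) ∈ P then ((k:ℝ)⁻¹)^n else 0) :=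
    sampleProb_Dg x hxinj g n P
  set N : ℝ := ∑ σ : Fin n → Fin k,
      (if (fun j => ((x (σ j), g (σ j)) : ℕ × Bool)) ∈ P then (1:ℝ) else 0) with hN
  have hspN : sampleProb (Dd g) n P = ((k:ℝ)⁻¹)^n * N := by
    rw [hsp, hN, Finset.mul_sum]
    exact Finset.sum_congr rfl fun σ _ => by split <;> simp
  have hmem : ∀ σ : Fin n → Fin k,
      ((fun j => ((x (σ j), g (σ j)) : ℕ × Bool)) ∈ P ↔ (1:ℝ)/8 ≤ L g σ) := by
    intro σ; rfl
  have hbound : ∀ σ : Fin n → Fin k, L g σ ≤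
      (7:ℝ)/8 * (if (fun j => ((x (σ j), g (σ j)) : ℕ × Bool)) ∈ P then (1:ℝ) else 0)
        + 1/8 := by
    intro σ
    by_cases hc : (fun j => ((x (σ j), g (σ j)) : ℕ × Bool)) ∈ P
    · rw [if_pos hc]
      have := hL1 g σ
      linarith
    · rw [if_neg hc]
      have := (hmem σ).not.1 hc
      push_neg at this
      linarith
  have hsum : ∑ σ : Fin n → Fin k, L g σ ≤ (7:ℝ)/8 * N + (k:ℝ)^n/8 := by
    calc ∑ σ : Fin n → Fin k, L g σ
        ≤ ∑ σ : Fin n → Fin k,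
          ((7:ℝ)/8 * (if (fun j => ((x (σ j), g (σ j)) : ℕ × Bool)) ∈ P
              then (1:ℝ) else 0) + 1/8) :=
          Finset.sum_le_sum fun σ _ => hbound σ
      _ = (7:ℝ)/8 * N + (k:ℝ)^n/8 := by
          rw [Finset.sum_add_distrib, ← Finset.mul_sum, ← hN, Finset.sum_const,
            Finset.card_univ, nsmul_eq_mul]
          norm_num [Fintype.card_fun]
          ring
  have hNge : (k:ℝ)^n/7 ≤ N := by linarith
  have hkpow : ((k:ℝ)⁻¹)^n * (k:ℝ)^n = 1 := by
    rw [← mul_pow, inv_mul_cancel₀ (ne_of_gt hkR), one_pow]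
  have hfin : (1:ℝ)/7 ≤ sampleProb (Dd g) n P := by
    rw [hspN]
    have h1 : ((k:ℝ)⁻¹)^n * ((k:ℝ)^n/7) ≤ ((k:ℝ)⁻¹)^n * N :=
      mul_le_mul_of_nonneg_left hNge (by positivity)
    have h2 : ((k:ℝ)⁻¹)^n * ((k:ℝ)^n/7) = 1/7 := by
      rw [mul_div_assoc'] at *
      rw [mul_div_assoc, ← mul_div_assoc, hkpow]
    linarith
  exact hfin
end

section
/- Let C be a nonempty concept class of functions ℕ → Bool and suppose the learner A improperly PAC learns C with sample complexity m. Set n := m⟨4,3⟩ and k := 2n and assume n ≥ 1. Then for all natural numbers x₁ < ⋯ < x_k there exists b ∈ Bool^k such that (h(x₁),…,h(x_k)) ≠ b for every h ∈ C; consequently C admits a (k−1)-witness and VCdim(C) ≤ 2·m⟨4,3⟩ − 1. -/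
/-- A `k`-witness for `C`. -/
def IsWitness (C : Set Hyp) (k : ℕ)
    (f : (Fin (k + 1) → ℕ) → (Fin (k + 1) → Bool)) : Prop :=
  ∀ x : Fin (k + 1) → ℕ, StrictMono x → ∀ h ∈ C, f x ≠ fun i => h (x i)

open Classical in
noncomputable def distr (k : ℕ) (x : Fin k → ℕ) (b : Fin k → Bool) : ℕ × Bool → ℝ :=
  fun p => if ∃ i, p = (x i, b i) then (k:ℝ)⁻¹ else 0

section
variable {k : ℕ} {x : Fin k → ℕ} {b : Fin k → Bool}

lemma pair_inj (hx : Function.Injective x) :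
    Function.Injective (fun i => (x i, b i)) := fun i j hij => hx (congrArg Prod.fst hij)

lemma distr_apply_mem (i : Fin k) : distr k x b (x i, b i) = (k:ℝ)⁻¹ := by
  rw [distr, if_pos ⟨i, rfl⟩]

lemma distr_apply_nmem {p : ℕ × Bool} (hp : ∀ i, p ≠ (x i, b i)) : distr k x b p = 0 := by
  rw [distr, if_neg]; rintro ⟨i, hi⟩; exact hp i hi

lemma distr_nonneg (p : ℕ × Bool) : 0 ≤ distr k x b p := by
  rw [distr]; split <;> positivity

lemma distr_isDistr (hk : 0 < k) (hx : Function.Injective x) : IsDistr (distr k x b) := by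
  classical
  refine ⟨distr_nonneg, ?_⟩
  have h0 : ∀ p ∉ Finset.image (fun i => (x i, b i)) Finset.univ, distr k x b p = 0 := by
    intro p hp
    refine distr_apply_nmem fun i hi => hp ?_
    exact Finset.mem_image.2 ⟨i, Finset.mem_univ i, hi.symm⟩
  have : HasSum (distr k x b) _ := hasSum_sum_of_ne_finset_zero h0
  convert this using 1
  rw [Finset.sum_image (fun i _ j _ h => pair_inj (b := b) hx h)]
  simp only [distr_apply_mem]
  rw [Finset.sum_const, Finset.card_univ, Fintype.card_fin, nsmul_eq_mul]
  field_simp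

lemma trueError_distr (hx : Function.Injective x) (g : Hyp) :
    trueError (distr k x b) g = ∑ i, if g (x i) ≠ b i then (k:ℝ)⁻¹ else 0 := by
  classical
  rw [trueError]
  have h0 : ∀ p ∉ Finset.image (fun i => (x i, b i)) Finset.univ,
      (if g p.1 ≠ p.2 then distr k x b p else 0) = 0 := by
    intro p hp
    have : distr k x b p = 0 := by
      refine distr_apply_nmem fun i hi => hp (Finset.mem_image.2 ⟨i, Finset.mem_univ i, hi.symm⟩)
    rw [this]; split <;> rfl
  rw [tsum_eq_sum h0, Finset.sum_image (fun i _ j _ h => pair_inj (b := b) hx h)]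
  refine Finset.sum_congr rfl fun i _ => ?_
  simp only [distr_apply_mem]

open Classical in
lemma sampleProb_distr (hx : Function.Injective x) (n : ℕ) (P : Set (Fin n → ℕ × Bool)) :
    sampleProb (distr k x b) n P
      = ∑ σ : Fin n → Fin k,
          if (fun t => (x (σ t), b (σ t))) ∈ P then ((k:ℝ) ^ n)⁻¹ else 0 := by
  classical
  set Sf : (Fin n → Fin k) → (Fin n → ℕ × Bool) := fun σ t => (x (σ t), b (σ t)) with hSf
  have hSfinj : Function.Injective Sf := by
    intro σ σ' h
    funext t
    exact pair_inj (b := b) hx (congrFun h t)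
  have h0 : ∀ S ∉ Finset.image Sf Finset.univ,
      P.indicator (fun T => ∏ i, distr k x b (T i)) S = 0 := by
    intro S hS
    by_contra hne
    have hSP : S ∈ P := by
      by_contra hSP; exact hne (Set.indicator_of_notMem hSP _)
    rw [Set.indicator_of_mem hSP] at hne
    have hall : ∀ t, ∃ i, S t = (x i, b i) := by
      intro t
      by_contra hc
      push_neg at hc
      exact hne (Finset.prod_eq_zero (Finset.mem_univ t) (distr_apply_nmem hc))
    choose σ hσ using hall
    exact hS (Finset.mem_image.2 ⟨σ, Finset.mem_univ σ, (funext fun t => (hσ t).symm)⟩)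
  rw [sampleProb, tsum_eq_sum h0, Finset.sum_image (fun i _ j _ h => hSfinj h)]
  refine Finset.sum_congr rfl fun σ _ => ?_
  rw [Set.indicator_apply]
  split <;> [skip; rfl]
  simp only [hSf, distr_apply_mem]
  rw [Finset.prod_const, Finset.card_univ, Fintype.card_fin, inv_pow]

end

open Classical in
lemma core (C : Set Hyp) (A : Learner) (m : ℕ → ℕ)
    (hA : ImPACLearns C A m) (n k : ℕ) (hn : n = m (cpair 4 3)) (hk : k = 2 * n)
    (hn1 : 1 ≤ n) (x : Fin k → ℕ) (hx : StrictMono x) :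
    ∃ b : Fin k → Bool, ∀ h ∈ C, (fun i => h (x i)) ≠ b := by
  by_contra hcon
  push_neg at hcon
  have hxinj := hx.injective
  have hkpos : 0 < k := by omega
  have hkR : (0:ℝ) < (k:ℝ) := by exact_mod_cast hkpos
  -- learned hypothesis and its error
  set g : (Fin k → Bool) → (Fin n → Fin k) → Hyp :=
    fun b σ => A (List.ofFn (fun t => (x (σ t), b (σ t)))) with hg
  set err : Hyp → (Fin k → Bool) → ℝ :=
    fun h b => ∑ i, if h (x i) ≠ b i then (k:ℝ)⁻¹ else 0 with herr
  have herr_nonneg : ∀ h b, 0 ≤ err h b := by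
    intro h b
    refine Finset.sum_nonneg fun i _ => ?_
    split <;> positivity
  have herr_le_one : ∀ h b, err h b ≤ 1 := by
    intro h b
    calc err h b ≤ ∑ _i : Fin k, (k:ℝ)⁻¹ := by
          refine Finset.sum_le_sum fun i _ => ?_
          split
          · exact le_refl _
          · positivity
      _ = 1 := by
          rw [Finset.sum_const, Finset.card_univ, Fintype.card_fin, nsmul_eq_mul]
          field_simp
  -- optimal error is ≤ 0
  have hopt : ∀ b : Fin k → Bool, optErr (distr k x b) C ≤ 0 := by
    intro b
    obtain ⟨h, hhC, hhb⟩ := hcon b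
    have hzero : trueError (distr k x b) h = 0 := by
      rw [trueError_distr hxinj]
      refine Finset.sum_eq_zero fun i _ => ?_
      rw [if_neg]
      simp only [ne_eq, not_not]
      exact congrFun hhb i
    have hbdd : BddBelow (Set.range fun h : C => trueError (distr k x b) h.val) := by
      refine ⟨0, ?_⟩
      rintro y ⟨h', rfl⟩
      show (0:ℝ) ≤ trueError (distr k x b) h'.val
      rw [trueError_distr hxinj]
      refine Finset.sum_nonneg fun i _ => ?_
      split <;> positivity
    exact le_trans (ciInf_le hbdd ⟨h, hhC⟩) (le_of_eq hzero)
  -- abbreviations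
  set q : ℝ := ((k:ℝ) ^ n)⁻¹ with hq
  have hqpos : 0 < q := by positivity
  have hqsum : ∑ _σ : Fin n → Fin k, q = 1 := by
    rw [Finset.sum_const, Finset.card_univ, Fintype.card_fun, Fintype.card_fin,
      Fintype.card_fin, nsmul_eq_mul, hq]
    push_cast
    rw [mul_inv_cancel₀ (by positivity)]
  set E : (Fin k → Bool) → ℝ := fun b => ∑ σ : Fin n → Fin k, q * err (g b σ) b with hE
  -- Step E : E b < 1/4 for every b
  have hElt : ∀ b, E b < 1/4 := by
    intro b
    have hPAC := hA.2 4 3 n (le_of_eq hn.symm) (distr k x b) (distr_isDistr hkpos hxinj)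
    rw [sampleProb_distr hxinj] at hPAC
    set P₀ : Set (Fin n → ℕ × Bool) :=
      {S | trueError (distr k x b) (A (List.ofFn S)) ≤ optErr (distr k x b) C + ((2:ℝ)^4)⁻¹}
      with hP₀
    set G : ℝ := ∑ σ : Fin n → Fin k,
      if (fun t => (x (σ t), b (σ t))) ∈ P₀ then q else 0 with hG
    have hGgt : G > 1 - ((2:ℝ)^3)⁻¹ := hPAC
    have hstep : ∀ σ : Fin n → Fin k,
        q * err (g b σ) b ≤ q - (15/16) * (if (fun t => (x (σ t), b (σ t))) ∈ P₀ then q else 0) := by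
      intro σ
      by_cases hmem : (fun t => (x (σ t), b (σ t))) ∈ P₀
      · rw [if_pos hmem]
        have h1 : trueError (distr k x b) (g b σ)
            ≤ optErr (distr k x b) C + ((2:ℝ)^4)⁻¹ := hmem
        rw [trueError_distr hxinj] at h1
        have h2 : err (g b σ) b ≤ (16:ℝ)⁻¹ := by
          have := hopt b
          rw [herr]
          norm_num at h1 ⊢
          linarith
        nlinarith [hqpos.le]
      · rw [if_neg hmem]
        have := herr_le_one (g b σ) b
        nlinarith [hqpos.le]
    calc E b ≤ ∑ σ : Fin n → Fin k,
          (q - (15/16) * (if (fun t => (x (σ t), b (σ t))) ∈ P₀ then q else 0)) :=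
          Finset.sum_le_sum fun σ _ => hstep σ
      _ = 1 - (15/16) * G := by
          rw [Finset.sum_sub_distrib, hqsum, ← Finset.mul_sum, hG]
      _ < 1/4 := by norm_num at hGgt ⊢; linarith
  -- Step F : averaging lower bound
  set u : ℝ := ((2:ℝ)^k)⁻¹ with hu
  have hupos : 0 < u := by positivity
  have hcard : (Fintype.card (Fin k → Bool) : ℝ) = (2:ℝ)^k := by
    rw [Fintype.card_fun, Fintype.card_fin, Fintype.card_bool]
    push_cast
    ring
  -- per-σ lower bound
  have hsigma : ∀ σ : Fin n → Fin k,
      (2:ℝ)^k / 4 ≤ ∑ b : Fin k → Bool, err (g b σ) b := by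
    intro σ
    -- unseen indices
    set U : Finset (Fin k) := Finset.univ \ Finset.image σ Finset.univ with hU
    have hUcard : n ≤ U.card := by
      have h1 : (Finset.image σ Finset.univ).card ≤ n := by
        calc (Finset.image σ Finset.univ).card ≤ (Finset.univ : Finset (Fin n)).card :=
              Finset.card_image_le
          _ = n := by rw [Finset.card_univ, Fintype.card_fin]
      have h2 := Finset.card_sdiff_of_subset (Finset.subset_univ (Finset.image σ Finset.univ))
      rw [← hU] at h2
      rw [h2, Finset.card_univ, Fintype.card_fin]
      omega
    -- for unseen i, half of the b's are misclassified at i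
    have hhalf : ∀ i ∈ U,
        ∑ b : Fin k → Bool, (if g b σ (x i) ≠ b i then (1:ℝ) else 0) = (2:ℝ)^k / 2 := by
      intro i hi
      have hnoti : ∀ t, σ t ≠ i := by
        intro t ht
        rw [hU, Finset.mem_sdiff] at hi
        exact hi.2 (Finset.mem_image.2 ⟨t, Finset.mem_univ t, ht⟩)
      have hinv : Function.Involutive (fun b : Fin k → Bool => Function.update b i (!b i)) := by
        intro b
        funext j
        rcases eq_or_ne j i with rfl | hj
        · simp
        · simp [Function.update_of_ne hj]
      set φ := hinv.toPerm with hφ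
      set f : (Fin k → Bool) → ℝ := fun b => if g b σ (x i) ≠ b i then (1:ℝ) else 0 with hf
      have hφapp : ∀ b : Fin k → Bool, φ b = Function.update b i (!b i) := fun b => rfl
      have hgeq : ∀ b, g (φ b) σ = g b σ := by
        intro b
        have hfun : (fun t => (x (σ t), φ b (σ t))) = fun t => (x (σ t), b (σ t)) := by
          funext t
          rw [hφapp, Function.update_of_ne (hnoti t)]
        simp only [hg]
        rw [hfun]
      have hpair : ∀ b, f b + f (φ b) = 1 := by
        intro b
        rw [hf]
        simp only [hgeq]
        have hbi : φ b i = !(b i) := by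
          rw [hφapp]
          exact Function.update_self i (!b i) b
        rw [hbi]
        cases hb : b i <;> cases hgv : g b σ (x i) <;> simp [hb, hgv]
      have hcomp : ∑ b : Fin k → Bool, f (φ b) = ∑ b : Fin k → Bool, f b :=
        Equiv.sum_comp φ f
      have : (2:ℝ) * ∑ b : Fin k → Bool, f b = (2:ℝ)^k := by
        have h3 : ∑ b : Fin k → Bool, (f b + f (φ b)) = (2:ℝ)^k := by
          rw [Finset.sum_congr rfl fun b _ => hpair b, Finset.sum_const,
            Finset.card_univ, nsmul_eq_mul, mul_one, hcard]
        rw [Finset.sum_add_distrib, hcomp] at h3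
        linarith
      linarith
    -- now bound the double sum
    have hswap0 : ∑ b : Fin k → Bool, err (g b σ) b
        = ∑ i : Fin k, ∑ b : Fin k → Bool,
            (if g b σ (x i) ≠ b i then (k:ℝ)⁻¹ else 0) := by
      simp only [herr]
      exact Finset.sum_comm
    have hfac : ∀ i : Fin k, ∑ b : Fin k → Bool, (if g b σ (x i) ≠ b i then (k:ℝ)⁻¹ else 0)
        = (k:ℝ)⁻¹ * ∑ b : Fin k → Bool, (if g b σ (x i) ≠ b i then (1:ℝ) else 0) := by
      intro i
      rw [Finset.mul_sum]
      refine Finset.sum_congr rfl fun b' _ => ?_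
      split <;> simp
    have hswap : ∑ b : Fin k → Bool, err (g b σ) b
        = (k:ℝ)⁻¹ * ∑ i : Fin k, ∑ b : Fin k → Bool,
            (if g b σ (x i) ≠ b i then (1:ℝ) else 0) := by
      rw [hswap0, Finset.mul_sum]
      exact Finset.sum_congr rfl fun i _ => hfac i
    have hlow : (↑U.card : ℝ) * ((2:ℝ)^k / 2)
        ≤ ∑ i : Fin k, ∑ b : Fin k → Bool, (if g b σ (x i) ≠ b i then (1:ℝ) else 0) := by
      calc (↑U.card : ℝ) * ((2:ℝ)^k / 2)
          = ∑ i ∈ U, ((2:ℝ)^k / 2) := by rw [Finset.sum_const, nsmul_eq_mul]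
        _ = ∑ i ∈ U, ∑ b : Fin k → Bool, (if g b σ (x i) ≠ b i then (1:ℝ) else 0) :=
            (Finset.sum_congr rfl fun i hi => (hhalf i hi).symm)
        _ ≤ ∑ i : Fin k, ∑ b : Fin k → Bool, (if g b σ (x i) ≠ b i then (1:ℝ) else 0) := by
            refine Finset.sum_le_sum_of_subset_of_nonneg (Finset.subset_univ U) ?_
            intro i _ _
            refine Finset.sum_nonneg fun b _ => ?_
            split <;> norm_num
    rw [hswap]
    have hnU : (n:ℝ) ≤ (↑U.card : ℝ) := by exact_mod_cast hUcard
    have hkn : (k:ℝ) = 2 * n := by rw [hk]; push_cast; ring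
    have h2k : (0:ℝ) < (2:ℝ)^k := by positivity
    have hnR : (0:ℝ) < (n:ℝ) := by exact_mod_cast hn1
    calc (2:ℝ)^k / 4 = (k:ℝ)⁻¹ * ((n:ℝ) * ((2:ℝ)^k / 2)) := by
          rw [hkn]; field_simp; ring
      _ ≤ (k:ℝ)⁻¹ * ((↑U.card : ℝ) * ((2:ℝ)^k / 2)) := by
          refine mul_le_mul_of_nonneg_left ?_ (by positivity)
          refine mul_le_mul_of_nonneg_right hnU (by positivity)
      _ ≤ (k:ℝ)⁻¹ * ∑ i : Fin k, ∑ b : Fin k → Bool,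
            (if g b σ (x i) ≠ b i then (1:ℝ) else 0) :=
          mul_le_mul_of_nonneg_left hlow (by positivity)
  -- total expectation bounds
  have hTotal_ge : (1/4 : ℝ) ≤ ∑ b : Fin k → Bool, u * E b := by
    have h1 : ∑ b : Fin k → Bool, u * E b
        = u * q * ∑ σ : Fin n → Fin k, ∑ b : Fin k → Bool, err (g b σ) b := by
      simp only [hE]
      calc ∑ b : Fin k → Bool, u * ∑ σ : Fin n → Fin k, q * err (g b σ) b
          = ∑ b : Fin k → Bool, ∑ σ : Fin n → Fin k, u * q * err (g b σ) b := by
            refine Finset.sum_congr rfl fun b _ => ?_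
            rw [Finset.mul_sum]
            exact Finset.sum_congr rfl fun σ _ => by ring
        _ = ∑ σ : Fin n → Fin k, ∑ b : Fin k → Bool, u * q * err (g b σ) b :=
            Finset.sum_comm
        _ = u * q * ∑ σ : Fin n → Fin k, ∑ b : Fin k → Bool, err (g b σ) b := by
            rw [Finset.mul_sum]
            exact Finset.sum_congr rfl fun σ _ => (Finset.mul_sum _ _ _).symm
    rw [h1]
    have h2 : ∑ _σ : Fin n → Fin k, ((2:ℝ)^k / 4)
        ≤ ∑ σ : Fin n → Fin k, ∑ b : Fin k → Bool, err (g b σ) b :=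
      Finset.sum_le_sum fun σ _ => hsigma σ
    have h3 : ∑ _σ : Fin n → Fin k, ((2:ℝ)^k / 4) = ((k:ℝ)^n) * ((2:ℝ)^k / 4) := by
      rw [Finset.sum_const, Finset.card_univ, Fintype.card_fun, Fintype.card_fin,
        Fintype.card_fin, nsmul_eq_mul]
      push_cast
      ring
    have hk0 : (k:ℝ) ≠ 0 := ne_of_gt hkR
    have huq : u * q * (((k:ℝ)^n) * ((2:ℝ)^k / 4)) = 1/4 := by
      rw [hu, hq]
      field_simp
    calc (1/4 : ℝ) = u * q * (((k:ℝ)^n) * ((2:ℝ)^k / 4)) := huq.symm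
      _ ≤ u * q * ∑ σ : Fin n → Fin k, ∑ b : Fin k → Bool, err (g b σ) b := by
          refine mul_le_mul_of_nonneg_left ?_ (by positivity)
          rw [← h3]; exact h2
  have hTotal_lt : ∑ b : Fin k → Bool, u * E b < 1/4 := by
    calc ∑ b : Fin k → Bool, u * E b < ∑ _b : Fin k → Bool, u * (1/4) := by
          refine Finset.sum_lt_sum_of_nonempty Finset.univ_nonempty fun b _ => ?_
          exact mul_lt_mul_of_pos_left (hElt b) hupos
      _ = 1/4 := by
          rw [Finset.sum_const, Finset.card_univ, nsmul_eq_mul, hcard, hu]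
          field_simp
  linarith

/-- If `A` improperly PAC learns the nonempty class `C` with sample complexity `m`,
`n = m⟨4,3⟩ ≥ 1` and `k = 2n`, then for all `x₁ < ⋯ < x_k` some `b ∈ Bool^k`
is avoided by every `h ∈ C`; consequently `C` admits a `(k-1)`-witness and
`VCdim C ≤ 2·m⟨4,3⟩ − 1`. -/
theorem learner_yields_witness (C : Set Hyp) (hC : C.Nonempty)
    (A : Learner) (m : ℕ → ℕ) (hA : ImPACLearns C A m)
    (n k : ℕ) (hn : n = m (cpair 4 3)) (hk : k = 2 * n) (hn1 : 1 ≤ n) :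
    (∀ x : Fin k → ℕ, StrictMono x →
      ∃ b : Fin k → Bool, ∀ h ∈ C, (fun i => h (x i)) ≠ b) ∧
    (∃ f, IsWitness C (k - 1) f) ∧
    VCdim C ≤ ((2 * m (cpair 4 3) - 1 : ℕ) : ℕ∞) := by
  classical
  have hpart1 : ∀ x : Fin k → ℕ, StrictMono x →
      ∃ b : Fin k → Bool, ∀ h ∈ C, (fun i => h (x i)) ≠ b :=
    fun x hx => core C A m hA n k hn hk hn1 x hx
  have hk2 : 2 ≤ k := by omega
  refine ⟨hpart1, ?_, ?_⟩
  · -- witness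
    have e : k - 1 + 1 = k := by omega
    refine ⟨fun xs =>
      if hxs : StrictMono (fun i : Fin k => xs (Fin.cast e.symm i)) then
        (fun i => Classical.choose (hpart1 _ hxs) (Fin.cast e i))
      else (fun _ => true), ?_⟩
    intro xs hxs h hhC hne
    have hx' : StrictMono (fun i : Fin k => xs (Fin.cast e.symm i)) := by
      intro a b hab
      refine hxs ?_
      rw [Fin.lt_def, Fin.coe_cast, Fin.coe_cast]
      exact hab
    have hne' : (if hxs : StrictMono (fun i : Fin k => xs (Fin.cast e.symm i)) then
        (fun i => Classical.choose (hpart1 _ hxs) (Fin.cast e i))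
      else (fun _ => true)) = fun i => h (xs i) := hne
    rw [dif_pos hx'] at hne'
    have spec := Classical.choose_spec (hpart1 _ hx')
    refine spec h hhC ?_
    funext i
    have hcc : Fin.cast e (Fin.cast e.symm i) = i := Fin.ext (by simp)
    have := congrFun hne' (Fin.cast e.symm i)
    simp only [hcc] at this
    exact this.symm
  · -- VC dimension bound
    have hkey : ∀ Afin : Finset ℕ, Shatters C Afin → Afin.card ≤ k - 1 := by
      intro Afin hshat
      by_contra hcard
      push_neg at hcard
      have hklecard : k ≤ Afin.card := by omega
      obtain ⟨B, hBsub, hBk⟩ := Finset.exists_subset_card_eq hklecard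
      set xf : Fin k → ℕ := fun i => ((B.orderIsoOfFin hBk i : ℕ)) with hxf
      have hxfmono : StrictMono xf := by
        intro a b hab
        exact Subtype.coe_lt_coe.2 ((B.orderIsoOfFin hBk).lt_iff_lt.2 hab)
      obtain ⟨b, hb⟩ := hpart1 xf hxfmono
      set g : ℕ → Bool := fun y => if hy : ∃ i, xf i = y then b (Classical.choose hy) else true
        with hg
      obtain ⟨h, hhC, hagree⟩ := hshat g
      refine hb h hhC ?_
      funext i
      have hmem : xf i ∈ Afin := hBsub (B.orderIsoOfFin hBk i).2
      have h1 : h (xf i) = g (xf i) := hagree _ hmem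
      have hye : ∃ j, xf j = xf i := ⟨i, rfl⟩
      have h2 : g (xf i) = b i := by
        rw [hg]
        simp only [dif_pos hye]
        congr 1
        exact hxfmono.injective (Classical.choose_spec hye)
      rw [h1, h2]
    rw [VCdim]
    refine iSup_le fun Afin => iSup_le fun hshat => ?_
    have := hkey Afin hshat
    have hmk : k - 1 = 2 * m (cpair 4 3) - 1 := by omega
    exact_mod_cast Nat.cast_le.2 (hmk ▸ this)
end

section
/- Let C be a nonempty concept class of functions ℕ → Bool and let f : ℕ^{k+1} → Bool^{k+1} be a k-witness for C. Call a hypothesis h good for f if its support supp(h) := {x : h(x) = true} is finite and f(x₁,…,x_{k+1}) ≠ (h(x₁),…,h(x_{k+1})) holds for all x₁ < ⋯ < x_{k+1} < max(supp(h)), and let H_f be the set of hypotheses good for f. Then VCdim(C ∪ H_f) ≤ k + 1. -/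
/-- If `f` is a `k`-witness for the nonempty class `C` and `H_f` is the class of
hypotheses `h` that are good for `f` (finite support, and
`f(x₁,…,x_{k+1}) ≠ (h(x₁),…,h(x_{k+1}))` for all `x₁ < ⋯ < x_{k+1} < max supp(h)`,
i.e. whenever all `x_i` lie below some element of the support),
then `VCdim (C ∪ H_f) ≤ k + 1`. -/
theorem vcdim_union_good_le (C : Set Hyp) (hC : C.Nonempty) (k : ℕ)
    (f : (Fin (k + 1) → ℕ) → (Fin (k + 1) → Bool)) (hf : IsWitness C k f)
    (Hf : Set Hyp)
    (hHf : Hf = {h : Hyp | {x | h x = true}.Finite ∧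
      ∀ x : Fin (k + 1) → ℕ, StrictMono x →
        (∃ y, h y = true ∧ ∀ i, x i < y) → f x ≠ fun i => h (x i)}) :
    VCdim (C ∪ Hf) ≤ ((k + 1 : ℕ) : ℕ∞) := by
  have key : ∀ A : Finset ℕ, Shatters (C ∪ Hf) A → A.card ≤ k + 1 := by
    intro A hA
    by_contra hcard
    push_neg at hcard
    have hn : k + 2 ≤ A.card := hcard
    set n := A.card with hn'
    let e := A.orderIsoOfFin rfl
    let x : Fin (k + 1) → ℕ := fun i => (e ⟨i.val, by omega⟩ : ℕ)
    have hxmono : StrictMono x := by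
      intro i j hij
      exact e.strictMono (show (⟨i.val, _⟩ : Fin n) < ⟨j.val, _⟩ from hij)
    let z : ℕ := (e ⟨n - 1, by omega⟩ : ℕ)
    have hxz : ∀ i, x i < z := by
      intro i
      exact e.strictMono (show (⟨i.val, _⟩ : Fin n) < ⟨n - 1, _⟩ from by
        simp only [Fin.mk_lt_mk]; omega)
    have hxA : ∀ i, x i ∈ A := fun i => (e ⟨i.val, by omega⟩).2
    have hzA : z ∈ A := (e ⟨n - 1, by omega⟩).2
    classical
    let g : ℕ → Bool := fun y => if hy : ∃ i, x i = y then f x hy.choose else true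
    have hgx : ∀ i, g (x i) = f x i := by
      intro i
      have hy : ∃ j, x j = x i := ⟨i, rfl⟩
      have : hy.choose = i := hxmono.injective hy.choose_spec
      simp only [g, dif_pos hy, this]
    have hgz : g z = true := by
      have : ¬ ∃ i, x i = z := by
        rintro ⟨i, hi⟩; exact absurd hi (Nat.ne_of_lt (hxz i))
      simp only [g, dif_neg this]
    obtain ⟨h, hmem, hagree⟩ := hA g
    have hhx : (fun i => h (x i)) = f x := by
      funext i
      rw [hagree _ (hxA i), hgx]
    cases hmem with
    | inl hmemC => exact hf x hxmono h hmemC hhx.symm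
    | inr hmemH =>
      rw [hHf] at hmemH
      refine hmemH.2 x hxmono ⟨z, ?_, hxz⟩ hhx.symm
      rw [hagree _ hzA, hgz]
  rw [VCdim]
  refine iSup_le fun A => iSup_le fun hA => ?_
  exact_mod_cast key A hA
end

section
/- Let P ⊆ ℝ^{ℕ×Bool} be the set of probability distributions on ℕ × Bool (functions with nonnegative values summing to 1), equipped with the subspace topology of the product topology on ℝ^{ℕ×Bool}, and endow ℕ → Bool with the product topology (Bool discrete). Then the true-error function L : P × (ℕ → Bool) → ℝ, defined by L(𝒟,h) := Σ_{(x,y) : h(x) ≠ y} 𝒟(x,y), is continuous. -/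
open Topology Filter


/-- The set of probability distributions on `ℕ × Bool`, as a subspace of the
product space `ℝ^(ℕ × Bool)`. -/
def ProbDistr : Type :=
  {D : ℕ × Bool → ℝ // (∀ p, 0 ≤ D p) ∧ HasSum D 1}

instance : TopologicalSpace ProbDistr :=
  instTopologicalSpaceSubtype

lemma summable_aux (D : ℕ × Bool → ℝ) (h : Hyp) (hpos : ∀ p, 0 ≤ D p)
    (hsum : Summable D) :
    Summable fun p : ℕ × Bool => if h p.1 ≠ p.2 then D p else 0 :=
  Summable.of_nonneg_of_le (fun p => by by_cases hc : h p.1 ≠ p.2 <;> simp [hc, hpos p])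
    (fun p => by by_cases hc : h p.1 ≠ p.2 <;> simp [hc, hpos p]) hsum

lemma split_aux (D : ℕ × Bool → ℝ) (h : Hyp) (hpos : ∀ p, 0 ≤ D p)
    (hsum : HasSum D 1) (F : Finset (ℕ × Bool)) :
    trueError D h = (∑ p ∈ F, if h p.1 ≠ p.2 then D p else 0) +
      ∑' p : ((F : Set (ℕ × Bool))ᶜ : Set (ℕ × Bool)),
        if h (p : ℕ × Bool).1 ≠ (p : ℕ × Bool).2 then D p else 0 :=
  (Summable.sum_add_tsum_compl (s := F) (summable_aux D h hpos hsum.summable)).symm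

lemma tail_nonneg (D : ℕ × Bool → ℝ) (h : Hyp) (hpos : ∀ p, 0 ≤ D p)
    (F : Finset (ℕ × Bool)) :
    0 ≤ ∑' p : ((F : Set (ℕ × Bool))ᶜ : Set (ℕ × Bool)),
        if h (p : ℕ × Bool).1 ≠ (p : ℕ × Bool).2 then D p else 0 :=
  tsum_nonneg fun p => by
    by_cases hc : h (p : ℕ × Bool).1 ≠ (p : ℕ × Bool).2 <;> simp [hc, hpos]

lemma tail_le (D : ℕ × Bool → ℝ) (h : Hyp) (hpos : ∀ p, 0 ≤ D p)
    (hsum : HasSum D 1) (F : Finset (ℕ × Bool)) :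
    (∑' p : ((F : Set (ℕ × Bool))ᶜ : Set (ℕ × Bool)),
        if h (p : ℕ × Bool).1 ≠ (p : ℕ × Bool).2 then D p else 0) ≤
      1 - ∑ p ∈ F, D p := by
  have hDtail : (∑' p : ((F : Set (ℕ × Bool))ᶜ : Set (ℕ × Bool)), D p) =
      1 - ∑ p ∈ F, D p := by
    have h1 := Summable.sum_add_tsum_compl (s := F) hsum.summable
    rw [hsum.tsum_eq] at h1
    linarith
  calc (∑' p : ((F : Set (ℕ × Bool))ᶜ : Set (ℕ × Bool)),
        if h (p : ℕ × Bool).1 ≠ (p : ℕ × Bool).2 then D p else 0)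
      ≤ ∑' p : ((F : Set (ℕ × Bool))ᶜ : Set (ℕ × Bool)), D p := by
        apply Summable.tsum_le_tsum
        · intro p
          by_cases hc : h (p : ℕ × Bool).1 ≠ (p : ℕ × Bool).2 <;> simp [hc, hpos]
        · exact (summable_aux D h hpos hsum.summable).subtype _
        · exact hsum.summable.subtype _
    _ = 1 - ∑ p ∈ F, D p := hDtail

/-- The true-error function `L : P × (ℕ → Bool) → ℝ` is continuous, where `P`
carries the subspace topology of the product topology on `ℝ^(ℕ × Bool)` and
`ℕ → Bool` carries the product topology. -/
theorem continuous_trueError :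
    Continuous (fun q : ProbDistr × Hyp => trueError q.1.1 q.2) := by
  rw [continuous_iff_continuousAt]
  rintro ⟨⟨D₀, hD₀pos, hD₀sum⟩, h₀⟩
  rw [ContinuousAt, Metric.tendsto_nhds]
  intro ε hε
  obtain ⟨F, hF⟩ : ∃ F : Finset (ℕ × Bool), 1 - ε / 4 < ∑ p ∈ F, D₀ p :=
    (hD₀sum.eventually (eventually_gt_nhds (by linarith))).exists
  set δ : ℝ := ε / (4 * (F.card + 1)) with hδdef
  have hδpos : 0 < δ := by positivity
  have hcardδ : (F.card : ℝ) * δ ≤ ε / 4 := by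
    rw [hδdef]
    rw [mul_div_assoc']
    rw [div_le_div_iff₀ (by positivity) (by norm_num)]
    ring_nf
    nlinarith [Nat.cast_nonneg (α := ℝ) F.card, hε]
  have hev1 : ∀ᶠ q : ProbDistr × Hyp in
      𝓝 (⟨⟨D₀, hD₀pos, hD₀sum⟩, h₀⟩ : ProbDistr × Hyp),
      ∀ p ∈ F, |q.1.1 p - D₀ p| < δ := by
    rw [Filter.eventually_all_finset]
    intro p _
    have hc : Continuous fun q : ProbDistr × Hyp => q.1.1 p :=
      (continuous_apply p).comp (continuous_subtype_val.comp continuous_fst)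
    exact (hc.tendsto _).eventually (eventually_abs_sub_lt _ hδpos)
  have hev2 : ∀ᶠ q : ProbDistr × Hyp in
      𝓝 (⟨⟨D₀, hD₀pos, hD₀sum⟩, h₀⟩ : ProbDistr × Hyp),
      ∀ x ∈ F.image Prod.fst, q.2 x = h₀ x := by
    rw [Filter.eventually_all_finset]
    intro x _
    have hc : Continuous fun q : ProbDistr × Hyp => q.2 x :=
      (continuous_apply x).comp continuous_snd
    have hmem : ∀ᶠ b in 𝓝 (h₀ x), b = h₀ x := by
      filter_upwards [(isOpen_discrete {h₀ x}).mem_nhds (Set.mem_singleton _)] with b hb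
      exact hb
    exact (hc.tendsto (⟨⟨D₀, hD₀pos, hD₀sum⟩, h₀⟩ : ProbDistr × Hyp)).eventually hmem
  filter_upwards [hev1, hev2] with q hq1 hq2
  obtain ⟨⟨D, hDpos, hDsum⟩, h⟩ := q
  simp only at hq1 hq2 ⊢
  rw [Real.dist_eq]
  set S := ∑ p ∈ F, if h p.1 ≠ p.2 then D p else 0 with hS
  set S₀ := ∑ p ∈ F, if h₀ p.1 ≠ p.2 then D₀ p else 0 with hS₀
  set T := ∑' p : ((F : Set (ℕ × Bool))ᶜ : Set (ℕ × Bool)),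
      if h (p : ℕ × Bool).1 ≠ (p : ℕ × Bool).2 then D p else 0 with hT
  set T₀ := ∑' p : ((F : Set (ℕ × Bool))ᶜ : Set (ℕ × Bool)),
      if h₀ (p : ℕ × Bool).1 ≠ (p : ℕ × Bool).2 then D₀ p else 0 with hT₀
  have hsplit : trueError D h = S + T := split_aux D h hDpos hDsum F
  have hsplit₀ : trueError D₀ h₀ = S₀ + T₀ := split_aux D₀ h₀ hD₀pos hD₀sum F
  -- bound on |S - S₀|
  have hSS₀ : |S - S₀| ≤ (F.card : ℝ) * δ := by
    rw [hS, hS₀, ← Finset.sum_sub_distrib]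
    calc |∑ p ∈ F, ((if h p.1 ≠ p.2 then D p else 0) - if h₀ p.1 ≠ p.2 then D₀ p else 0)|
        ≤ ∑ p ∈ F, |(if h p.1 ≠ p.2 then D p else 0) - if h₀ p.1 ≠ p.2 then D₀ p else 0| :=
          Finset.abs_sum_le_sum_abs _ _
      _ ≤ ∑ _p ∈ F, δ := by
          apply Finset.sum_le_sum
          intro p hp
          have hx : h p.1 = h₀ p.1 := hq2 p.1 (Finset.mem_image_of_mem _ hp)
          rw [hx]
          by_cases hc : h₀ p.1 ≠ p.2
          · rw [if_pos hc, if_pos hc]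
            exact (hq1 p hp).le
          · rw [if_neg hc, if_neg hc]
            simpa using hδpos.le
      _ = (F.card : ℝ) * δ := by rw [Finset.sum_const, nsmul_eq_mul]
  -- sum of D over F is close to sum of D₀
  have hsumD : ∑ p ∈ F, D₀ p - (F.card : ℝ) * δ ≤ ∑ p ∈ F, D p := by
    have : ∀ p ∈ F, D₀ p - δ ≤ D p := by
      intro p hp
      have := abs_lt.1 (hq1 p hp)
      linarith [this.1]
    calc ∑ p ∈ F, D₀ p - (F.card : ℝ) * δ = ∑ p ∈ F, (D₀ p - δ) := by
          rw [Finset.sum_sub_distrib, Finset.sum_const, nsmul_eq_mul]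
      _ ≤ ∑ p ∈ F, D p := Finset.sum_le_sum this
  have hTnn : 0 ≤ T := tail_nonneg D h hDpos F
  have hT₀nn : 0 ≤ T₀ := tail_nonneg D₀ h₀ hD₀pos F
  have hTle : T ≤ 1 - ∑ p ∈ F, D p := tail_le D h hDpos hDsum F
  have hT₀le : T₀ ≤ 1 - ∑ p ∈ F, D₀ p := tail_le D₀ h₀ hD₀pos hD₀sum F
  have habs : |trueError D h - trueError D₀ h₀| ≤ |S - S₀| + (T + T₀) := by
    rw [hsplit, hsplit₀, show S + T - (S₀ + T₀) = (S - S₀) + (T - T₀) by ring]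
    calc |(S - S₀) + (T - T₀)| ≤ |S - S₀| + |T - T₀| := abs_add_le _ _
      _ ≤ |S - S₀| + (T + T₀) := by
          have : |T - T₀| ≤ T + T₀ := by
            rw [abs_sub_le_iff]; constructor <;> linarith
          linarith
  have hTlt : T < ε / 4 + ε / 4 := by linarith
  have hT₀lt : T₀ < ε / 4 := by linarith
  calc |trueError D h - trueError D₀ h₀| ≤ |S - S₀| + (T + T₀) := habs
    _ < ε := by linarith
end

section
/- There exists a computable sequence (h_i)_{i∈ℕ} of hypotheses h_i : ℕ → Bool such that: (i) for every n ∈ ℕ the sequence (h_i(n))_{i∈ℕ} is eventually constant, so the pointwise limit h := lim_{i→∞} h_i exists; (ii) the limit h is not computable; and (iii) the concept class H := {h} ∪ {h_i : i ∈ ℕ} admits a computable 1-witness, i.e., there is a computable function w : ℕ² → Bool² with w(x₁,x₂) ≠ (g(x₁),g(x₂)) for all x₁ < x₂ in ℕ and all g ∈ H. In particular, H has effective VC dimension at most 1 while containing a non-computable hypothesis. -/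
namespace EVCaux

open Nat.Partrec Nat.Partrec.Code Finset

/-- Stage predicate for a padded halting set: odd numbers are always in;
`2*e` is in iff code `e` halts on input `0` within `s` steps. -/
def T (n s : ℕ) : Bool :=
  decide (n % 2 = 1) || (evaln s (Denumerable.ofNat Code (n / 2)) 0).isSome

lemma T_mono {n s t : ℕ} (hst : s ≤ t) (h : T n s = true) : T n t = true := by
  simp only [T, Bool.or_eq_true, decide_eq_true_eq, Option.isSome_iff_exists] at h ⊢
  rcases h with h | ⟨x, hx⟩
  · exact Or.inl h
  · exact Or.inr ⟨x, evaln_mono hst hx⟩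

/-- The padded halting set. -/
def W (n : ℕ) : Prop := ∃ s, T n s = true

lemma T_odd (n s : ℕ) : T (2 * n + 1) s = true := by
  simp only [T, Bool.or_eq_true, decide_eq_true_eq]
  left
  omega

lemma T_false_of_not_W {n : ℕ} (h : ¬ W n) (s : ℕ) : T n s = false := by
  rw [Bool.eq_false_iff]; intro hs; exact h ⟨s, hs⟩

/-- Scaled partial sums `A i n = 2^n * Σ_{k<n, T k i} 2^{-k-1}` (a natural number). -/
def A (i n : ℕ) : ℕ := ∑ k ∈ range n, if T k i then 2 ^ (n - k - 1) else 0

/-- The numerator of the `i`-th approximation `c i = C i / 2^i`. -/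
def C (i : ℕ) : ℕ := A i i

/-- Values of points: `v ⟨n, m⟩ = m / 2^(n+1)`. -/
noncomputable def v (x : ℕ) : ℚ := (x.unpair.2 : ℚ) / 2 ^ (x.unpair.1 + 1)

/-- Rational approximations to the left-c.e. real. -/
noncomputable def c (i : ℕ) : ℚ := (C i : ℚ) / 2 ^ i

/-- Rational partial sums. -/
noncomputable def a (i n : ℕ) : ℚ := ∑ k ∈ range n, if T k i then ((2 : ℚ) ^ (k + 1))⁻¹ else 0

lemma A_div (i n : ℕ) : (A i n : ℚ) / 2 ^ n = a i n := by
  rw [A, a, Nat.cast_sum, sum_div]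
  refine Finset.sum_congr rfl fun k hk => ?_
  rw [mem_range] at hk
  split_ifs with h
  · rw [div_eq_iff (by positivity), inv_mul_eq_div, eq_div_iff (by positivity)]
    push_cast
    rw [← pow_add]
    congr 1
    omega
  · simp

lemma c_eq (i : ℕ) : c i = a i i := by rw [c, C, A_div]

lemma a_mono_stage {i j : ℕ} (hij : i ≤ j) (n : ℕ) : a i n ≤ a j n := by
  refine Finset.sum_le_sum fun k _ => ?_
  by_cases h : T k i = true
  · rw [if_pos h, if_pos (T_mono hij h)]
  · rw [if_neg h]
    positivity

lemma a_nonneg (i n : ℕ) : 0 ≤ a i n := by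
  refine Finset.sum_nonneg fun k _ => ?_
  split_ifs <;> positivity

lemma a_mono_pts {n m : ℕ} (i : ℕ) (hnm : n ≤ m) : a i n ≤ a i m := by
  refine Finset.sum_le_sum_of_subset_of_nonneg (by simpa using hnm) fun k _ _ => ?_
  split_ifs <;> positivity

lemma c_mono {i j : ℕ} (hij : i ≤ j) : c i ≤ c j := by
  rw [c_eq, c_eq]
  exact le_trans (a_mono_stage hij i) (a_mono_pts j hij)

/-- The sequence of hypotheses, computably defined via natural-number arithmetic. -/
def h (i x : ℕ) : Bool := decide (x.unpair.2 * 2 ^ i < C i * 2 ^ (x.unpair.1 + 1))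

lemma h_iff (i x : ℕ) : h i x = true ↔ v x < c i := by
  rw [h, decide_eq_true_iff, v, c, div_lt_div_iff₀ (by positivity) (by positivity)]
  exact_mod_cast Iff.rfl

open Classical in
/-- The limit hypothesis. -/
noncomputable def hl : Hyp := fun x => decide (∃ i, v x < c i)

lemma hl_iff (x : ℕ) : hl x = true ↔ ∃ i, v x < c i := by
  simp only [hl, decide_eq_true_iff]

lemma h_mono {i j x : ℕ} (hij : i ≤ j) (hx : h i x = true) : h j x = true := by
  rw [h_iff] at hx ⊢
  exact lt_of_lt_of_le hx (c_mono hij)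

/-- Geometric sum identity. -/
lemma geom_sum_Ico {m j : ℕ} (hmj : m ≤ j) :
    ∑ k ∈ Finset.Ico m j, ((2 : ℚ) ^ (k + 1))⁻¹ = (2 ^ m)⁻¹ - (2 ^ j)⁻¹ := by
  induction j, hmj using Nat.le_induction with
  | base => simp
  | succ j hmj ih =>
    rw [Finset.sum_Ico_succ_top hmj, ih]
    have : (2 : ℚ) ^ (j + 1) = 2 ^ j * 2 := pow_succ 2 j
    field_simp
    ring

/-- If `n` is never enumerated, approximations are bounded by `a j n + 2^{-(n+1)}`. -/
lemma c_le_of_not_W {n : ℕ} (hn : ¬ W n) (j : ℕ) :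
    c j ≤ a j n + ((2 : ℚ) ^ (n + 1))⁻¹ := by
  rw [c_eq]
  rcases le_or_gt j n with hjn | hnj
  · exact le_trans (a_mono_pts j hjn) (le_add_of_nonneg_right (by positivity))
  · have hsplit : a j j = a j n + ∑ k ∈ Finset.Ico n j, (if T k j then ((2:ℚ)^(k+1))⁻¹ else 0) := by
      rw [a, a, Finset.range_eq_Ico, Finset.range_eq_Ico]
      exact (Finset.sum_Ico_consecutive (fun k => if T k j then ((2:ℚ)^(k+1))⁻¹ else 0) (Nat.zero_le n) (le_of_lt hnj)).symm
    have hbot : ∑ k ∈ Finset.Ico n j, (if T k j then ((2:ℚ)^(k+1))⁻¹ else 0)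
        = ∑ k ∈ Finset.Ico (n+1) j, (if T k j then ((2:ℚ)^(k+1))⁻¹ else 0) := by
      rw [Finset.sum_eq_sum_Ico_succ_bot hnj, T_false_of_not_W hn j]
      simp
    have htail : ∑ k ∈ Finset.Ico (n+1) j, (if T k j then ((2:ℚ)^(k+1))⁻¹ else 0)
        ≤ ((2 : ℚ) ^ (n + 1))⁻¹ := by
      rcases le_or_gt (n+1) j with hj' | hj'
      · calc ∑ k ∈ Finset.Ico (n+1) j, (if T k j then ((2:ℚ)^(k+1))⁻¹ else 0)
            ≤ ∑ k ∈ Finset.Ico (n+1) j, ((2:ℚ)^(k+1))⁻¹ := by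
              refine Finset.sum_le_sum fun k _ => ?_
              split_ifs
              · exact le_rfl
              · positivity
          _ = (2 ^ (n+1))⁻¹ - (2 ^ j)⁻¹ := geom_sum_Ico hj'
          _ ≤ (2 ^ (n+1))⁻¹ := by
              have : (0:ℚ) < (2 ^ j)⁻¹ := by positivity
              linarith
      · rw [Finset.Ico_eq_empty (by omega), Finset.sum_empty]
        positivity
    rw [hsplit, hbot]
    linarith

/-- The query points `X i n` have value `v (X i n) = a i n + 2^{-(n+1)}`. -/
def X (i n : ℕ) : ℕ := Nat.pair n (2 * A i n + 1)

lemma v_X (i n : ℕ) : v (X i n) = a i n + ((2 : ℚ) ^ (n + 1))⁻¹ := by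
  rw [v, X, Nat.unpair_pair, ← A_div]
  have h2 : ((2 : ℚ) ^ (n + 1)) = 2 ^ n * 2 := pow_succ 2 n
  push_cast
  rw [h2]
  have hn : ((2 : ℚ) ^ n) ≠ 0 := by positivity
  field_simp

lemma A_mono_stage {i j : ℕ} (hij : i ≤ j) (n : ℕ) : A i n ≤ A j n := by
  refine Finset.sum_le_sum fun k _ => ?_
  by_cases h : T k i = true
  · rw [if_pos h, if_pos (T_mono hij h)]
  · rw [if_neg h]
    exact Nat.zero_le _

lemma A_bound (i n : ℕ) : A i n ≤ n * 2 ^ n := by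
  calc A i n ≤ ∑ _k ∈ Finset.range n, 2 ^ n := by
        refine Finset.sum_le_sum fun k _ => ?_
        split_ifs
        · exact Nat.pow_le_pow_right (by norm_num) (by omega)
        · exact Nat.zero_le _
    _ = n * 2 ^ n := by simp [Finset.sum_const, mul_comm]

/-- There is a stage at which `a · n` is maximal. -/
lemma exists_max_a (n : ℕ) : ∃ i₀, ∀ j, a j n ≤ a i₀ n := by
  have hne : (Set.range fun j => A j n).Nonempty := ⟨A 0 n, 0, rfl⟩
  have hbdd : BddAbove (Set.range fun j => A j n) :=
    ⟨n * 2 ^ n, by rintro x ⟨j, rfl⟩; exact A_bound j n⟩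
  obtain ⟨i₀, hi₀⟩ := Nat.sSup_mem hne hbdd
  refine ⟨i₀, fun j => ?_⟩
  have hj : A j n ≤ A i₀ n :=
    calc A j n ≤ sSup (Set.range fun j => A j n) := le_csSup hbdd ⟨j, rfl⟩
      _ = A i₀ n := hi₀.symm
  rw [← A_div, ← A_div]
  have h2 : (0:ℚ) < 2 ^ n := by positivity
  gcongr

/-- If `n` is never enumerated then some query point is rejected by the limit. -/
lemma hl_X_false_of_not_W {n : ℕ} (hn : ¬ W n) : ∃ i, hl (X i n) = false := by
  obtain ⟨i₀, hi₀⟩ := exists_max_a n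
  refine ⟨i₀, ?_⟩
  rw [Bool.eq_false_iff]
  intro htrue
  obtain ⟨j, hj⟩ := (hl_iff _).1 htrue
  rw [v_X] at hj
  exact absurd hj (not_lt.2 (le_trans (c_le_of_not_W hn j) (by linarith [hi₀ j])))

/-- If `n` is enumerated then all query points are accepted by the limit. -/
lemma hl_X_true_of_W {n : ℕ} (hn : W n) (i : ℕ) : hl (X i n) = true := by
  obtain ⟨s₀, hs₀⟩ := hn
  rw [hl_iff]
  set m := 2 * n + 1 with hm
  set j := max i s₀ + 2 * n + 2 with hjdef
  refine ⟨j, ?_⟩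
  rw [v_X, c_eq]
  have hmax1 : i ≤ max i s₀ := le_max_left _ _
  have hmax2 : s₀ ≤ max i s₀ := le_max_right _ _
  have hij : i ≤ j := by omega
  have hs₀j : s₀ ≤ j := by omega
  have hmn : n < m := by omega
  have hmj : m < j := by omega
  have hnj : n < j := by omega
  have hTm : T m j = true := T_odd n j
  have hTn : T n j = true := T_mono hs₀j hs₀
  have hsub : insert m (Finset.range (n+1)) ⊆ Finset.range j := by
    intro k hk
    rcases Finset.mem_insert.1 hk with rfl | hk
    · exact Finset.mem_range.2 hmj
    · have hk' := Finset.mem_range.1 hk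
      exact Finset.mem_range.2 (by omega)
  have hle : ∑ k ∈ insert m (Finset.range (n+1)), (if T k j then ((2:ℚ)^(k+1))⁻¹ else 0)
      ≤ a j j := by
    refine Finset.sum_le_sum_of_subset_of_nonneg hsub fun k _ _ => ?_
    split_ifs
    · positivity
    · exact le_rfl
  have hins : ∑ k ∈ insert m (Finset.range (n+1)), (if T k j then ((2:ℚ)^(k+1))⁻¹ else 0)
      = ((2:ℚ)^(m+1))⁻¹ + (a j n + ((2:ℚ)^(n+1))⁻¹) := by
    rw [Finset.sum_insert (by simp [Finset.mem_range]; omega), Finset.sum_range_succ,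
      if_pos hTm, if_pos hTn, a]
  have hstage : a i n ≤ a j n := a_mono_stage hij n
  have hpos : (0:ℚ) < ((2:ℚ)^(m+1))⁻¹ := by positivity
  rw [hins] at hle
  linarith

/-! ### Computability -/

lemma primrec_T : Primrec₂ T := by
  have h1 : Primrec fun p : ℕ × ℕ => (evaln p.2 (Denumerable.ofNat Code (p.1 / 2)) 0).isSome :=
    Primrec.option_isSome.comp <| primrec_evaln.comp <|
      (Primrec.snd.pair ((Primrec.ofNat Code).comp
        (Primrec.nat_div.comp Primrec.fst (Primrec.const 2)))).pair (Primrec.const 0)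
  have h2 : Primrec fun p : ℕ × ℕ => decide (p.1 % 2 = 1) :=
    (Primrec.eq.comp (Primrec.nat_mod.comp Primrec.fst (Primrec.const 2)) (Primrec.const 1)).decide
  exact (Primrec.cond h2 (Primrec.const true) h1).of_eq fun p => by
    rcases h : decide (p.1 % 2 = 1) <;> simp [T, h]

lemma primrec_A : Primrec₂ A := by
  have hterm : Primrec₂ fun (p : ℕ × ℕ) (k : ℕ) =>
      cond (T k p.1) (2 ^ (p.2 - k - 1)) 0 :=
    Primrec.cond (primrec_T.comp Primrec.snd (Primrec.fst.comp Primrec.fst))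
      ((Primrec₂.unpaired'.1 Nat.Primrec.pow).comp (Primrec.const 2)
        (Primrec.nat_sub.comp
          (Primrec.nat_sub.comp (Primrec.snd.comp Primrec.fst) Primrec.snd)
          (Primrec.const 1)))
      (Primrec.const 0)
  have hlist : Primrec fun p : ℕ × ℕ =>
      (List.range p.2).map fun k => cond (T k p.1) (2 ^ (p.2 - k - 1)) 0 :=
    Primrec.list_map (Primrec.list_range.comp Primrec.snd) hterm
  have hfold : Primrec fun p : ℕ × ℕ =>
      (((List.range p.2).map fun k => cond (T k p.1) (2 ^ (p.2 - k - 1)) 0).foldr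
        (fun b s => b + s) 0) :=
    Primrec.list_foldr hlist (Primrec.const 0)
      (Primrec.nat_add.comp (Primrec.fst.comp Primrec.snd)
        (Primrec.snd.comp Primrec.snd)).to₂
  exact hfold.to₂.of_eq fun i n => by
    rw [A, ← List.sum_eq_foldr]
    show _ = ((List.range n).map fun k => if T k i then 2 ^ (n - k - 1) else 0).sum
    congr 1
    refine List.map_congr_left fun k _ => ?_
    rcases T k i <;> simp

lemma primrec_C : Primrec C :=
  primrec_A.comp Primrec.id Primrec.id

lemma computable_h : Computable₂ h := by
  have : Primrec₂ h := by
    have hlt : PrimrecRel fun (i x : ℕ) => x.unpair.2 * 2 ^ i < C i * 2 ^ (x.unpair.1 + 1) :=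
      Primrec.nat_lt.comp
        (Primrec.nat_mul.comp (Primrec.snd.comp (Primrec.unpair.comp Primrec.snd))
          ((Primrec₂.unpaired'.1 Nat.Primrec.pow).comp (Primrec.const 2) Primrec.fst))
        (Primrec.nat_mul.comp (primrec_C.comp Primrec.fst)
          ((Primrec₂.unpaired'.1 Nat.Primrec.pow).comp (Primrec.const 2)
            (Primrec.succ.comp (Primrec.fst.comp (Primrec.unpair.comp Primrec.snd)))))
    exact hlt.decide
  exact this.to_comp

lemma primrec_X : Primrec₂ X :=
  Primrec₂.natPair.comp Primrec.snd
    (Primrec.succ.comp (Primrec.nat_mul.comp (Primrec.const 2) primrec_A))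

/-- The computable 1-witness. -/
def w (x₁ x₂ : ℕ) : Bool × Bool :=
  if x₁.unpair.2 * 2 ^ (x₂.unpair.1 + 1) ≤ x₂.unpair.2 * 2 ^ (x₁.unpair.1 + 1) then
    (false, true) else (true, false)

lemma computable_w : Computable₂ w := by
  have hle : PrimrecRel fun (x₁ x₂ : ℕ) =>
      x₁.unpair.2 * 2 ^ (x₂.unpair.1 + 1) ≤ x₂.unpair.2 * 2 ^ (x₁.unpair.1 + 1) :=
    Primrec.nat_le.comp
      (Primrec.nat_mul.comp (Primrec.snd.comp (Primrec.unpair.comp Primrec.fst))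
        ((Primrec₂.unpaired'.1 Nat.Primrec.pow).comp (Primrec.const 2)
          (Primrec.succ.comp (Primrec.fst.comp (Primrec.unpair.comp Primrec.snd)))))
      (Primrec.nat_mul.comp (Primrec.snd.comp (Primrec.unpair.comp Primrec.snd))
        ((Primrec₂.unpaired'.1 Nat.Primrec.pow).comp (Primrec.const 2)
          (Primrec.succ.comp (Primrec.fst.comp (Primrec.unpair.comp Primrec.fst)))))
  exact (Primrec.ite hle (Primrec.const (false, true)) (Primrec.const (true, false))).to_comp

lemma w_cond_iff (x₁ x₂ : ℕ) :
    x₁.unpair.2 * 2 ^ (x₂.unpair.1 + 1) ≤ x₂.unpair.2 * 2 ^ (x₁.unpair.1 + 1) ↔ v x₁ ≤ v x₂ := by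
  rw [v, v, div_le_div_iff₀ (by positivity) (by positivity)]
  exact_mod_cast Iff.rfl

/-- Every hypothesis in the class is a cut of the `v`-order. -/
lemma mono_class {g : Hyp} (hg : g ∈ ({hl} ∪ Set.range h : Set Hyp)) {x y : ℕ}
    (hxy : v x ≤ v y) (hy : g y = true) : g x = true := by
  rcases hg with hg | ⟨i, rfl⟩
  · rw [Set.mem_singleton_iff] at hg
    subst hg
    rw [hl_iff] at hy ⊢
    obtain ⟨i, hi⟩ := hy
    exact ⟨i, lt_of_le_of_lt hxy hi⟩
  · rw [h_iff] at hy ⊢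
    exact lt_of_le_of_lt hxy hy

lemma not_computable_hl : ¬ Computable hl := by
  classical
  intro hc
  have hTc : Computable₂ T := primrec_T.to_comp
  have hhlX : Computable fun p : ℕ × ℕ => hl (X p.2 p.1) :=
    hc.comp (primrec_X.to_comp.comp Computable.snd Computable.fst)
  -- the search predicate
  have hPc : Computable fun p : ℕ × ℕ => T p.1 p.2 || !hl (X p.2 p.1) := by
    have := Computable.cond (hTc.comp Computable.fst Computable.snd)
      (Computable.const true)
      (Computable.cond hhlX (Computable.const false) (Computable.const true))
    exact this.of_eq fun p => by
      rcases hT : T p.1 p.2 <;> rcases hh : hl (X p.2 p.1) <;> simp [hT, hh]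
  have hP : Computable₂ fun n i : ℕ => T n i || !hl (X i n) := hPc
  -- the decision procedure for W
  have hrf : Partrec fun n : ℕ =>
      (Nat.rfind fun i => (Part.some (T n i || !hl (X i n)))).map fun i => T n i :=
    (Partrec.rfind hP.partrec₂).map hTc
  have tot : ∀ n : ℕ, decide (W n) ∈
      (Nat.rfind fun i => (Part.some (T n i || !hl (X i n)))).map fun i => T n i := by
    intro n
    have hex : ∃ i, (T n i || !hl (X i n)) = true := by
      by_cases hW : W n
      · obtain ⟨s, hs⟩ := hW
        exact ⟨s, by simp [hs]⟩
      · obtain ⟨i, hi⟩ := hl_X_false_of_not_W hW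
        exact ⟨i, by simp [hi]⟩
    obtain ⟨i, hi⟩ := hex
    have hdom : (Nat.rfind fun i => (Part.some (T n i || !hl (X i n)))).Dom :=
      Nat.rfind_dom.2 ⟨i, by simpa using hi, fun _ => trivial⟩
    set j := (Nat.rfind fun i => (Part.some (T n i || !hl (X i n)))).get hdom with hjdef
    have hjmem : j ∈ Nat.rfind fun i => (Part.some (T n i || !hl (X i n))) := Part.get_mem hdom
    have hPj : (T n j || !hl (X j n)) = true := by
      have := Nat.rfind_spec hjmem
      simpa using this
    have hTj : T n j = decide (W n) := by
      rcases hT : T n j with _ | _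
      · rw [hT] at hPj
        have hfalse : hl (X j n) = false := by simpa using hPj
        have hnW : ¬ W n := fun hW => by
          rw [hl_X_true_of_W hW j] at hfalse
          exact absurd hfalse (by simp)
        exact (decide_eq_false hnW).symm
      · exact (decide_eq_true ⟨j, hT⟩).symm
    rw [Part.mem_map_iff]
    exact ⟨j, hjmem, hTj⟩
  have hdec : Computable fun n => decide (W n) := Partrec.of_eq_tot hrf tot
  have hWpred : ComputablePred W :=
    ComputablePred.computable_iff.2
      ⟨_, hdec, funext fun n => propext decide_eq_true_iff.symm⟩
  have hhalt : ComputablePred fun c : Code => (eval c 0).Dom := by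
    obtain ⟨f, hf, hfeq⟩ := ComputablePred.computable_iff.1 hWpred
    refine ComputablePred.computable_iff.2
      ⟨fun c => f (2 * Encodable.encode c),
        hf.comp ((Primrec.nat_mul.comp (Primrec.const 2) Primrec.encode).to_comp),
        funext fun c => propext ?_⟩
    have hW2 : W (2 * Encodable.encode c) ↔ (eval c 0).Dom := by
      unfold W T
      constructor
      · rintro ⟨s, hs⟩
        simp only [Nat.mul_mod_right, Bool.or_eq_true, decide_eq_true_eq,
          Option.isSome_iff_exists] at hs
        rcases hs with h | ⟨x, hx⟩
        · omega
        · rw [Part.dom_iff_mem]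
          refine ⟨x, evaln_complete.2 ⟨s, ?_⟩⟩
          rwa [Nat.mul_div_cancel_left _ (by norm_num), Denumerable.ofNat_encode] at hx
      · intro hdom
        obtain ⟨x, hx⟩ := Part.dom_iff_mem.1 hdom
        obtain ⟨k, hk⟩ := evaln_complete.1 hx
        refine ⟨k, ?_⟩
        simp only [Nat.mul_mod_right, Bool.or_eq_true, decide_eq_true_eq,
          Option.isSome_iff_exists]
        refine Or.inr ⟨x, ?_⟩
        rwa [Nat.mul_div_cancel_left _ (by norm_num), Denumerable.ofNat_encode]
    have : (fun a => (f a : Prop)) = W := hfeq.symm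
    rw [show ((eval c 0).Dom) = W (2 * Encodable.encode c) from (propext hW2).symm, ← this]
  exact ComputablePred.halting_problem 0 hhalt

end EVCaux

/-- There is a computable sequence `(hᵢ)` of hypotheses that converges pointwise
(each column is eventually constant) to a non-computable hypothesis `h`, such
that the class `H = {h} ∪ {hᵢ : i ∈ ℕ}` admits a computable `1`-witness
`w : ℕ² → Bool²` (so `H` has effective VC dimension at most `1` while
containing a non-computable hypothesis). -/
theorem exists_computable_sequence_noncomputable_limit_computable_witness :
    ∃ h : ℕ → ℕ → Bool, Computable₂ h ∧
      ∃ hl : Hyp,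
        (∀ n : ℕ, ∀ᶠ i in Filter.atTop, h i n = hl n) ∧
        ¬ Computable hl ∧
        ∃ w : ℕ → ℕ → Bool × Bool, Computable₂ w ∧
          ∀ x₁ x₂ : ℕ, x₁ < x₂ →
            ∀ g ∈ ({hl} ∪ Set.range h : Set Hyp),
              w x₁ x₂ ≠ (g x₁, g x₂) := by
  refine ⟨EVCaux.h, EVCaux.computable_h, EVCaux.hl, ?_, EVCaux.not_computable_hl,
    EVCaux.w, EVCaux.computable_w, ?_⟩
  · intro n
    by_cases hn : EVCaux.hl n = true
    · obtain ⟨i₀, hi₀⟩ := (EVCaux.hl_iff n).1 hn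
      rw [Filter.eventually_atTop]
      refine ⟨i₀, fun i hi => ?_⟩
      rw [hn, EVCaux.h_iff]
      exact lt_of_lt_of_le hi₀ (EVCaux.c_mono hi)
    · rw [Bool.not_eq_true] at hn
      refine Filter.Eventually.of_forall fun i => ?_
      rw [hn, Bool.eq_false_iff]
      intro htrue
      rw [EVCaux.h_iff] at htrue
      have := (EVCaux.hl_iff n).2 ⟨i, htrue⟩
      rw [hn] at this
      exact absurd this (by simp)
  · intro x₁ x₂ _ g hg heq
    by_cases hcond : x₁.unpair.2 * 2 ^ (x₂.unpair.1 + 1) ≤ x₂.unpair.2 * 2 ^ (x₁.unpair.1 + 1)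
    · rw [EVCaux.w, if_pos hcond] at heq
      have h1 : g x₁ = false := (Prod.mk.injEq _ _ _ _ ▸ heq :
        false = g x₁ ∧ true = g x₂).1.symm
      have h2 : g x₂ = true := (Prod.mk.injEq _ _ _ _ ▸ heq :
        false = g x₁ ∧ true = g x₂).2.symm
      have := EVCaux.mono_class hg ((EVCaux.w_cond_iff x₁ x₂).1 hcond) h2
      rw [h1] at this
      exact absurd this (by simp)
    · rw [EVCaux.w, if_neg hcond] at heq
      have h1 : g x₁ = true := (Prod.mk.injEq _ _ _ _ ▸ heq :
        true = g x₁ ∧ false = g x₂).1.symm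
      have h2 : g x₂ = false := (Prod.mk.injEq _ _ _ _ ▸ heq :
        true = g x₁ ∧ false = g x₂).2.symm
      have hle : EVCaux.v x₂ ≤ EVCaux.v x₁ :=
        le_of_lt (lt_of_not_ge fun hle => hcond ((EVCaux.w_cond_iff x₁ x₂).2 hle))
      have := EVCaux.mono_class hg hle h1
      rw [h2] at this
      exact absurd this (by simp)
end

section
/- Let W be a computably enumerable set of finite Boolean words and let C := {h : ℕ → Bool | no w ∈ W is a prefix of h}, where a word w = (w₀,…,w_{l−1}) is a prefix of h iff h(i) = w_i for all i < l. Assume C ≠ ∅ and that d := VCdim(C) is finite. Then for every e ≥ d the class C admits a computable e-witness; in particular the effective VC dimension eVCdim(C) equals VCdim(C). -/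
/-- `w` is a prefix of `h` iff `h i = wᵢ` for all `i < |w|`. -/
def IsPrefixOf (w : List Bool) (h : Hyp) : Prop :=
  ∀ i < w.length, h i = w.getD i false






namespace CoCe

/-- All boolean lists of length `s`. -/
def allLists : ℕ → List (List Bool)
  | 0 => [[]]
  | s + 1 => (allLists s).flatMap fun v => [false :: v, true :: v]

lemma mem_allLists {s : ℕ} {v : List Bool} : v ∈ allLists s ↔ v.length = s := by
  induction s generalizing v with
  | zero => simp [allLists, List.length_eq_zero_iff]
  | succ s ih =>
    simp only [allLists, List.mem_flatMap, List.mem_cons, List.mem_singleton]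
    constructor
    · rintro ⟨w, hw, h⟩
      rcases h with rfl | h
      · simp [ih.1 hw]
      · rcases h with rfl | h
        · simp [ih.1 hw]
        · simp at h
    · intro hv
      cases v with
      | nil => simp at hv
      | cons b w =>
        exact ⟨w, ih.2 (by simpa using hv), by cases b <;> simp⟩

def prefixMatch (w v : List Bool) : Bool :=
  decide (w.length ≤ v.length) &&
    (List.range w.length).all fun i => decide (v.getD i false = w.getD i false)

def consistent (xl : List ℕ) (bl : List Bool) (v : List Bool) : Bool :=
  (List.range xl.length).all fun i =>
    decide (v.length ≤ xl.getD i 0) || decide (v.getD (xl.getD i 0) false = bl.getD i false)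

def covered (us : List (Option (List Bool))) (v : List Bool) : Bool :=
  us.any fun o => (o.map fun w => prefixMatch w v).getD false

def checkCore (us : List (Option (List Bool))) (xl : List ℕ) (bl : List Bool) (s : ℕ) : Bool :=
  (allLists s).all fun v => !(consistent xl bl v) || covered us v

def usTrace (u : ℕ → Option (List Bool)) : ℕ → List (Option (List Bool))
  | 0 => [u 0]
  | s + 1 => usTrace u s ++ [u (s + 1)]

lemma mem_usTrace {u : ℕ → Option (List Bool)} {s : ℕ} {o : Option (List Bool)} :
    o ∈ usTrace u s ↔ ∃ n ≤ s, u n = o := by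
  induction s with
  | zero => simp [usTrace, eq_comm]
  | succ s ih =>
    simp only [usTrace, List.mem_append, List.mem_singleton, ih]
    constructor
    · rintro (⟨n, hn, rfl⟩ | rfl)
      · exact ⟨n, hn.trans (Nat.le_succ s), rfl⟩
      · exact ⟨s + 1, le_rfl, rfl⟩
    · rintro ⟨n, hn, rfl⟩
      rcases Nat.lt_or_ge n (s + 1) with h | h
      · exact Or.inl ⟨n, Nat.lt_succ_iff.1 h, rfl⟩
      · exact Or.inr (by rw [Nat.le_antisymm hn h])

def strictChain (xl : List ℕ) : Bool :=
  (List.range xl.length).all fun i =>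
    decide (xl.length ≤ i + 1) || decide (xl.getD i 0 < xl.getD (i + 1) 0)

def mainCheck (u : ℕ → Option (List Bool)) (e : ℕ) (xl : List ℕ) (n : ℕ) : Bool :=
  checkCore (usTrace u n.unpair.2) xl ((allLists (e + 1)).getD n.unpair.1 []) n.unpair.2

def guard' (e : ℕ) (xl : List ℕ) : Bool :=
  strictChain xl && decide (xl.length = e + 1)

def qfun (u : ℕ → Option (List Bool)) (e : ℕ) (xl : List ℕ) (n : ℕ) : Bool :=
  mainCheck u e xl n || !(guard' e xl)

end CoCe


namespace CoCe
open Primrec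

variable {α β : Type*} [Primcodable α] [Primcodable β]

lemma primrec_list_all {f : α → List β} {p : α → β → Bool} (hf : Primrec f)
    (hp : Primrec₂ p) : Primrec fun a => (f a).all (p a) := by
  have : Primrec fun a => (f a).foldr (fun b r => p a b && r) true :=
    list_foldr hf (const true)
      (((dom_bool₂ (· && ·)).comp (hp.comp Primrec.fst (Primrec.fst.comp Primrec.snd))
        (Primrec.snd.comp Primrec.snd)).to₂)
  refine this.of_eq fun a => ?_
  induction f a with
  | nil => rfl
  | cons b l ihl => simp [List.all_cons, ihl]

lemma primrec_list_any {f : α → List β} {p : α → β → Bool} (hf : Primrec f)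
    (hp : Primrec₂ p) : Primrec fun a => (f a).any (p a) := by
  have : Primrec fun a => (f a).foldr (fun b r => p a b || r) false :=
    list_foldr hf (const false)
      (((dom_bool₂ (· || ·)).comp (hp.comp Primrec.fst (Primrec.fst.comp Primrec.snd))
        (Primrec.snd.comp Primrec.snd)).to₂)
  refine this.of_eq fun a => ?_
  induction f a with
  | nil => rfl
  | cons b l ihl => simp [List.any_cons, ihl]

lemma primrec_allLists : Primrec allLists := by
  refine (nat_rec' (f := @id ℕ) (g := fun _ => [([] : List Bool)])
    (h := fun _ p => p.2.flatMap fun v => [false :: v, true :: v])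
    Primrec.id (const _) ?_).of_eq ?_
  · exact (list_flatMap (Primrec.snd.comp Primrec.snd)
      ((list_cons.comp (list_cons.comp (const false) Primrec.snd)
        (list_cons.comp (list_cons.comp (const true) Primrec.snd) (const []))).to₂)).to₂
  · intro s
    induction s with
    | zero => rfl
    | succ s ih => simp only [allLists, id_eq] at ih ⊢; rw [← ih]

lemma primrec_prefixMatch : Primrec₂ prefixMatch := by
  show Primrec fun p : List Bool × List Bool => prefixMatch p.1 p.2
  unfold prefixMatch
  refine (dom_bool₂ (· && ·)).comp ?_ ?_
  · exact PrimrecPred.decide (PrimrecRel.comp nat_le ((list_length (α := Bool)).comp Primrec.fst)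
      ((list_length (α := Bool)).comp Primrec.snd))
  · refine primrec_list_all (list_range.comp (list_length.comp Primrec.fst)) ?_
    show Primrec₂ fun (p : List Bool × List Bool) (i : ℕ) =>
      decide (p.2.getD i false = p.1.getD i false)
    exact (PrimrecPred.decide (PrimrecRel.comp Primrec.eq
      ((list_getD false).comp (Primrec.snd.comp Primrec.fst) Primrec.snd)
      ((list_getD false).comp (Primrec.fst.comp Primrec.fst) Primrec.snd))).to₂

lemma primrec_consistent :
    Primrec fun p : List ℕ × List Bool × List Bool => consistent p.1 p.2.1 p.2.2 := by
  unfold consistent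
  refine primrec_list_all (list_range.comp (list_length.comp Primrec.fst)) ?_
  have h : Primrec fun q : (List ℕ × List Bool × List Bool) × ℕ =>
      (decide (q.1.2.2.length ≤ q.1.1.getD q.2 0) ||
        decide (q.1.2.2.getD (q.1.1.getD q.2 0) false = q.1.2.1.getD q.2 false)) := by
    refine (dom_bool₂ (· || ·)).comp ?_ ?_
    · exact PrimrecPred.decide (PrimrecRel.comp nat_le
        ((list_length (α := Bool)).comp (Primrec.snd.comp (Primrec.snd.comp Primrec.fst)))
        ((list_getD 0).comp (Primrec.fst.comp Primrec.fst) Primrec.snd))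
    · exact PrimrecPred.decide (PrimrecRel.comp Primrec.eq
        ((list_getD false).comp (Primrec.snd.comp (Primrec.snd.comp Primrec.fst))
          ((list_getD 0).comp (Primrec.fst.comp Primrec.fst) Primrec.snd))
        ((list_getD false).comp (Primrec.fst.comp (Primrec.snd.comp Primrec.fst)) Primrec.snd))
  exact h.to₂

lemma primrec_covered : Primrec₂ covered := by
  show Primrec fun p : List (Option (List Bool)) × List Bool => covered p.1 p.2
  unfold covered
  refine primrec_list_any Primrec.fst ?_
  have hin : Primrec fun r : ((List (Option (List Bool)) × List Bool) × Option (List Bool))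
      × List Bool => prefixMatch r.2 r.1.1.2 :=
    primrec_prefixMatch.comp Primrec.snd (Primrec.snd.comp (Primrec.fst.comp Primrec.fst))
  have h : Primrec fun q : (List (Option (List Bool)) × List Bool) × Option (List Bool) =>
      (q.2.map fun w => prefixMatch w q.1.2).getD false := by
    refine option_getD.comp ?_ (const false)
    exact option_map Primrec.snd hin.to₂
  exact h.to₂

lemma primrec_checkCore :
    Primrec fun p : List (Option (List Bool)) × List ℕ × List Bool × ℕ =>
      checkCore p.1 p.2.1 p.2.2.1 p.2.2.2 := by
  unfold checkCore
  refine primrec_list_all (primrec_allLists.comp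
    (Primrec.snd.comp (Primrec.snd.comp Primrec.snd))) ?_
  have h : Primrec fun q : (List (Option (List Bool)) × List ℕ × List Bool × ℕ) × List Bool =>
      (!(consistent q.1.2.1 q.1.2.2.1 q.2) || covered q.1.1 q.2) := by
    refine (dom_bool₂ (· || ·)).comp ?_ ?_
    · refine Primrec.not.comp ?_
      exact primrec_consistent.comp
        ((Primrec.fst.comp (Primrec.snd.comp Primrec.fst)).pair
          (((Primrec.fst.comp (Primrec.snd.comp (Primrec.snd.comp Primrec.fst)))).pair
            Primrec.snd))
    · exact primrec_covered.comp (Primrec.fst.comp Primrec.fst) Primrec.snd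
  exact h.to₂

lemma primrec_strictChain : Primrec strictChain := by
  unfold strictChain
  refine primrec_list_all (list_range.comp list_length) ?_
  have h : Primrec fun q : List ℕ × ℕ =>
      (decide (q.1.length ≤ q.2 + 1) || decide (q.1.getD q.2 0 < q.1.getD (q.2 + 1) 0)) := by
    refine (dom_bool₂ (· || ·)).comp ?_ ?_
    · exact PrimrecPred.decide (PrimrecRel.comp nat_le ((list_length (α := ℕ)).comp Primrec.fst) (succ.comp Primrec.snd))
    · exact PrimrecPred.decide (PrimrecRel.comp nat_lt
        ((list_getD 0).comp Primrec.fst Primrec.snd)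
        ((list_getD 0).comp Primrec.fst (succ.comp Primrec.snd)))
  exact h.to₂

lemma computable_usTrace {u : ℕ → Option (List Bool)} (hu : Computable u) :
    Computable (usTrace u) := by
  refine (Computable.nat_rec (f := @id ℕ) (g := fun _ => [u 0])
    (h := fun _ p => p.2 ++ [u (p.1 + 1)]) Computable.id (Computable.const [u 0])
    ?_).of_eq ?_
  · have hstep : Computable fun q : ℕ × (ℕ × List (Option (List Bool))) =>
        q.2.2 ++ [u (q.2.1 + 1)] :=
      (Primrec.list_append.to_comp).comp (Computable.snd.comp Computable.snd)
        ((Primrec.list_cons.to_comp).comp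
          (hu.comp ((Primrec.succ.to_comp).comp (Computable.fst.comp Computable.snd)))
          (Computable.const []))
    exact hstep.to₂
  · intro s
    induction s with
    | zero => rfl
    | succ s ih => simp only [usTrace, id_eq] at ih ⊢; rw [← ih]

lemma computable_qfun {u : ℕ → Option (List Bool)} (hu : Computable u) (e : ℕ) :
    Computable₂ (qfun u e) := by
  show Computable fun p : List ℕ × ℕ => qfun u e p.1 p.2
  unfold qfun
  have c1 : Computable fun p : List ℕ × ℕ => usTrace u (Nat.unpair p.2).2 :=
    (computable_usTrace hu).comp
      ((Primrec.snd.comp (Primrec.unpair.comp Primrec.snd)).to_comp)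
  have c2 : Computable fun p : List ℕ × ℕ => (allLists (e + 1)).getD (Nat.unpair p.2).1 [] :=
    ((list_getD ([] : List Bool)).comp (const (allLists (e + 1)))
      (Primrec.fst.comp (Primrec.unpair.comp Primrec.snd))).to_comp
  have c3 : Computable fun p : List ℕ × ℕ => (Nat.unpair p.2).2 :=
    (Primrec.snd.comp (Primrec.unpair.comp Primrec.snd)).to_comp
  have hmc : Computable fun p : List ℕ × ℕ => mainCheck u e p.1 p.2 :=
    Computable.of_eq
      ((primrec_checkCore.to_comp).comp (c1.pair (Computable.fst.pair (c2.pair c3))))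
      (fun p => rfl)
  have hg : Computable fun p : List ℕ × ℕ => !(guard' e p.1) := by
    unfold guard'
    refine (Primrec.not.comp ?_).to_comp
    refine (dom_bool₂ (· && ·)).comp (primrec_strictChain.comp Primrec.fst) ?_
    exact PrimrecPred.decide (PrimrecRel.comp Primrec.eq ((list_length (α := ℕ)).comp Primrec.fst) (const (e + 1)))
  exact ((dom_bool₂ (· || ·)).to_comp).comp hmc hg

end CoCe

namespace CoCe

lemma getD_ofFn {α : Type*} {n : ℕ} (x : Fin n → α) {i : ℕ} (h : i < n) (d : α) :
    (List.ofFn x).getD i d = x ⟨i, h⟩ := by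
  rw [List.getD_eq_getElem (l := List.ofFn x) (d := d) (by simpa using h), List.getElem_ofFn]

lemma le_foldr_max {l : List ℕ} {a : ℕ} (ha : a ∈ l) : a ≤ l.foldr max 0 := by
  induction l with
  | nil => simp at ha
  | cons b l ih =>
    rcases List.mem_cons.1 ha with rfl | ha
    · exact le_max_left _ _
    · exact (ih ha).trans (le_max_right _ _)

/-- Soundness of the stage check. -/
lemma sound {u : ℕ → Option (List Bool)} {W : Set (List Bool)}
    (hW : W = {w | ∃ n, u n = some w}) {C : Set Hyp}
    (hC : C = {h | ∀ w ∈ W, ¬ IsPrefixOf w h}) {xl : List ℕ} {bl : List Bool} {s : ℕ}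
    (hchk : checkCore (usTrace u s) xl bl s = true) {h : Hyp} (hh : h ∈ C)
    (hmatch : ∀ i < xl.length, h (xl.getD i 0) = bl.getD i false) : False := by
  classical
  set v : List Bool := List.ofFn (fun i : Fin s => h i) with hv
  have hvlen : v.length = s := by simp [hv]
  have hvmem : v ∈ allLists s := mem_allLists.2 hvlen
  have hvget : ∀ j < s, v.getD j false = h j := fun j hj => by
    rw [hv, getD_ofFn _ hj]
  have hall := List.all_eq_true.1 hchk v hvmem
  have hcons : consistent xl bl v = true := by
    refine List.all_eq_true.2 fun i hi => ?_
    have hi' : i < xl.length := List.mem_range.1 hi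
    rcases le_or_gt v.length (xl.getD i 0) with hle | hlt
    · exact (Bool.or_eq_true _ _).mpr (Or.inl (decide_eq_true hle))
    · have : v.getD (xl.getD i 0) false = bl.getD i false := by
        rw [hvget _ (hvlen ▸ hlt)]
        exact hmatch i hi'
      exact (Bool.or_eq_true _ _).mpr (Or.inr (decide_eq_true this))
  have hcov : covered (usTrace u s) v = true := by
    rcases (Bool.or_eq_true _ _).mp hall with hl | hr
    · rw [Bool.not_eq_true'] at hl
      rw [hcons] at hl
      exact absurd hl (by simp)
    · exact hr
  obtain ⟨o, ho, hoval⟩ := List.any_eq_true.1 hcov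
  obtain ⟨n, hn, hun⟩ := mem_usTrace.1 ho
  cases o with
  | none => simp at hoval
  | some w =>
    simp only [Option.map_some, Option.getD_some] at hoval
    obtain ⟨hwl, hpfx⟩ := (Bool.and_eq_true _ _).mp hoval
    have hwlen : w.length ≤ s := (of_decide_eq_true hwl).trans (le_of_eq hvlen)
    have hwW : w ∈ W := by rw [hW]; exact ⟨n, hun⟩
    have hpre : IsPrefixOf w h := by
      intro i hi
      have := List.all_eq_true.1 hpfx i (List.mem_range.2 hi)
      have heq : v.getD i false = w.getD i false := of_decide_eq_true this
      rw [← heq, hvget _ (lt_of_lt_of_le hi hwlen)]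
    exact (hC ▸ hh) w hwW hpre

/-- Compactness: a non-realizable pattern is confirmed at some finite stage. -/
lemma exists_stage {u : ℕ → Option (List Bool)} {W : Set (List Bool)}
    (hW : W = {w | ∃ n, u n = some w}) {C : Set Hyp}
    (hC : C = {h | ∀ w ∈ W, ¬ IsPrefixOf w h}) (xl : List ℕ) (bl : List Bool)
    (hnb : ∀ h : Hyp, (∀ i < xl.length, h (xl.getD i 0) = bl.getD i false) → h ∉ C) :
    ∃ s, checkCore (usTrace u s) xl bl s = true := by
  classical
  set K : Set Hyp := {h | ∀ i < xl.length, h (xl.getD i 0) = bl.getD i false} with hK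
  have hKclosed : IsClosed K := by
    have : K = ⋂ i : ℕ, {h : Hyp | i < xl.length → h (xl.getD i 0) = bl.getD i false} := by
      ext h; simp [hK, Set.mem_iInter]
    rw [this]
    refine isClosed_iInter fun i => ?_
    by_cases hi : i < xl.length
    · have : {h : Hyp | i < xl.length → h (xl.getD i 0) = bl.getD i false} =
          (fun h : Hyp => h (xl.getD i 0)) ⁻¹' {bl.getD i false} := by
        ext h; simp [hi]
      rw [this]
      exact IsClosed.preimage (continuous_apply _) (isClosed_discrete _)
    · have : {h : Hyp | i < xl.length → h (xl.getD i 0) = bl.getD i false} = Set.univ := by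
        ext h; simp [hi]
      rw [this]; exact isClosed_univ
  have hKcompact : IsCompact K := hKclosed.isCompact
  set U : ℕ → Set Hyp := fun n => {h | ∃ w, u n = some w ∧ IsPrefixOf w h} with hU
  have hUopen : ∀ n, IsOpen (U n) := by
    intro n
    rcases hn : u n with _ | w
    · have : U n = ∅ := by ext h; simp [hU, hn]
      rw [this]; exact isOpen_empty
    · have : U n = ⋂ i : Fin w.length, {h : Hyp | h i = w.getD i false} := by
        ext h
        simp only [hU, hn, Set.mem_setOf_eq, Set.mem_iInter, Option.some.injEq]
        constructor
        · rintro ⟨w', rfl, hp⟩ i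
          exact hp i i.2
        · intro hp
          exact ⟨w, rfl, fun i hi => hp ⟨i, hi⟩⟩
      rw [this]
      refine isOpen_iInter_of_finite fun i => ?_
      show IsOpen ((fun h : Hyp => h (i : ℕ)) ⁻¹' {w.getD (i : ℕ) false})
      exact IsOpen.preimage (continuous_apply (i : ℕ))
        (isOpen_discrete ({w.getD (i : ℕ) false} : Set Bool))
  have hcov : K ⊆ ⋃ n, U n := by
    intro h hhK
    have hhnc : h ∉ C := hnb h hhK
    rw [hC] at hhnc
    simp only [Set.mem_setOf_eq, not_forall] at hhnc
    obtain ⟨w, hwW, hpre⟩ := hhnc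
    rw [hW] at hwW
    obtain ⟨n, hun⟩ := hwW
    exact Set.mem_iUnion.2 ⟨n, w, hun, not_not.1 hpre⟩
  obtain ⟨t, ht⟩ := hKcompact.elim_finite_subcover U hUopen hcov
  set s : ℕ := (t.sup id) + (t.sup fun m => (u m).elim 0 List.length) +
    (xl.foldr max 0) + 1 with hs
  have hns : ∀ n ∈ t, n ≤ s := fun n hn => by
    have : n ≤ t.sup id := Finset.le_sup (f := id) hn
    omega
  have hws : ∀ n ∈ t, ∀ w, u n = some w → w.length ≤ s := by
    intro n hn w hun
    have h1 : (u n).elim 0 List.length ≤ t.sup fun m => (u m).elim 0 List.length :=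
      Finset.le_sup (f := fun m => (u m).elim 0 List.length) hn
    have h2 : (u n).elim 0 List.length = w.length := by rw [hun]; rfl
    omega
  have hxs : ∀ i < xl.length, xl.getD i 0 < s := by
    intro i hi
    have hmem : xl.getD i 0 ∈ xl := by
      rw [List.getD_eq_getElem (l := xl) (d := 0) hi]
      exact List.getElem_mem _
    have := le_foldr_max hmem
    omega
  refine ⟨s, List.all_eq_true.2 fun v hv => ?_⟩
  have hvlen : v.length = s := mem_allLists.1 hv
  by_cases hcv : consistent xl bl v = true
  · refine (Bool.or_eq_true _ _).mpr (Or.inr ?_)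
    set h : Hyp := fun i => v.getD i false with hdefh
    have hhK : h ∈ K := by
      intro i hi
      have := List.all_eq_true.1 hcv i (List.mem_range.2 hi)
      rcases (Bool.or_eq_true _ _).mp this with hl | hr
      · have := of_decide_eq_true hl
        exact absurd (hvlen ▸ this) (not_le.2 (hxs i hi))
      · exact of_decide_eq_true hr
    obtain ⟨n, hnt⟩ := Set.mem_iUnion₂.1 (ht hhK)
    obtain ⟨hnt, w, hun, hpre⟩ :
        n ∈ t ∧ ∃ w, u n = some w ∧ IsPrefixOf w h := by
      simpa [hU] using hnt
    refine List.any_eq_true.2 ⟨u n, mem_usTrace.2 ⟨n, hns n hnt, rfl⟩, ?_⟩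
    rw [hun]
    simp only [Option.map_some, Option.getD_some]
    refine (Bool.and_eq_true _ _).mpr ⟨decide_eq_true (by rw [hvlen]; exact hws n hnt w hun), ?_⟩
    refine List.all_eq_true.2 fun i hi => ?_
    have hi' : i < w.length := List.mem_range.1 hi
    refine decide_eq_true ?_
    have := hpre i hi'
    rw [← this]
  · refine (Bool.or_eq_true _ _).mpr (Or.inl ?_)
    simp only [Bool.not_eq_true']
    exact Bool.eq_false_iff.mpr hcv

lemma strictChain_mono {xl : List ℕ} (h : strictChain xl = true) :
    ∀ {i j : ℕ}, i < j → j < xl.length → xl.getD i 0 < xl.getD j 0 := by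
  have adj : ∀ i, i + 1 < xl.length → xl.getD i 0 < xl.getD (i + 1) 0 := by
    intro i hi
    have := List.all_eq_true.1 h i (List.mem_range.2 (by omega))
    rcases (Bool.or_eq_true _ _).mp this with hl | hr
    · exact absurd (of_decide_eq_true hl) (by omega)
    · exact of_decide_eq_true hr
  intro i j hij hj
  induction j with
  | zero => omega
  | succ j ih =>
    rcases Nat.lt_succ_iff_lt_or_eq.1 hij with h' | h'
    · exact (ih h' (by omega)).trans (adj j hj)
    · subst h'; exact adj i hj

lemma strictChain_ofFn {n : ℕ} {x : Fin n → ℕ} (hx : StrictMono x) :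
    strictChain (List.ofFn x) = true := by
  refine List.all_eq_true.2 fun i hi => ?_
  have hi' : i < n := by simpa using List.mem_range.1 hi
  rcases le_or_gt n (i + 1) with hle | hlt
  · exact (Bool.or_eq_true _ _).mpr (Or.inl (decide_eq_true (by simpa using hle)))
  · refine (Bool.or_eq_true _ _).mpr (Or.inr (decide_eq_true ?_))
    rw [getD_ofFn x hi', getD_ofFn x hlt]
    exact hx (by simp [Fin.lt_def])

lemma shatters_mono {C : Set Hyp} {A B : Finset ℕ} (hA : Shatters C A) (hBA : B ⊆ A) :
    Shatters C B := by
  intro g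
  obtain ⟨h, hh, hag⟩ := hA g
  exact ⟨h, hh, fun x hx => hag x (hBA hx)⟩

lemma card_le_of_shatters {C : Set Hyp} {d : ℕ} (hd : VCdim C = (d : ℕ∞))
    {A : Finset ℕ} (hA : Shatters C A) : A.card ≤ d := by
  have : (A.card : ℕ∞) ≤ VCdim C :=
    le_iSup₂ (f := fun (A : Finset ℕ) (_ : Shatters C A) => (A.card : ℕ∞)) A hA
  rw [hd] at this
  exact_mod_cast this

lemma exists_shattered_of_lt {C : Set Hyp} {d : ℕ} (hd : VCdim C = (d : ℕ∞))
    {k : ℕ} (hk : k < d) : ∃ A : Finset ℕ, Shatters C A ∧ A.card = k + 1 := by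
  have hlt : ((k : ℕ∞)) < VCdim C := by rw [hd]; exact_mod_cast hk
  rw [VCdim, lt_iSup_iff] at hlt
  obtain ⟨A, hA⟩ := hlt
  rw [lt_iSup_iff] at hA
  obtain ⟨hSh, hcard⟩ := hA
  have hcard' : k + 1 ≤ A.card := by exact_mod_cast hcard
  obtain ⟨B, hBA, hBcard⟩ := Finset.exists_subset_card_eq hcard'
  exact ⟨B, shatters_mono hSh hBA, hBcard⟩

lemma no_witness {C : Set Hyp} {d : ℕ} (hd : VCdim C = (d : ℕ∞)) {k : ℕ} (hk : k < d)
    (f : (Fin (k + 1) → ℕ) → (Fin (k + 1) → Bool)) : ¬ IsWitness C k f := by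
  classical
  intro hf
  obtain ⟨A, hA, hcard⟩ := exists_shattered_of_lt hd hk
  set x : Fin (k + 1) → ℕ := fun i => (A.orderIsoOfFin hcard i : ℕ) with hxdef
  have hmono : StrictMono x := fun i j hij =>
    (A.orderIsoOfFin hcard).strictMono hij
  set gfun : ℕ → Bool := fun m => if hm : ∃ i, x i = m then f x hm.choose else false with hg
  obtain ⟨h, hhC, hagree⟩ := hA gfun
  refine hf x hmono h hhC ?_
  funext i
  have hxiA : x i ∈ A := (A.orderIsoOfFin hcard i).2
  have h1 : h (x i) = gfun (x i) := hagree (x i) hxiA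
  have hex : ∃ j, x j = x i := ⟨i, rfl⟩
  have h2 : gfun (x i) = f x hex.choose := by rw [hg]; simp only []; rw [dif_pos hex]
  have h3 : hex.choose = i := hmono.injective hex.choose_spec
  rw [h1, h2, h3]

end CoCe

namespace CoCe

lemma exists_witness {u : ℕ → Option (List Bool)} (hu : Computable u)
    {W : Set (List Bool)} (hW : W = {w | ∃ n, u n = some w})
    {C : Set Hyp} (hC : C = {h | ∀ w ∈ W, ¬ IsPrefixOf w h})
    {d : ℕ} (hd : VCdim C = (d : ℕ∞)) (e : ℕ) (he : d ≤ e) :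
    ∃ f : (Fin (e + 1) → ℕ) → (Fin (e + 1) → Bool), IsWitness C e f ∧ Computable f := by
  classical
  have Eall : ∀ xl : List ℕ, ∃ n, qfun u e xl n = true := by
    intro xl
    by_cases hg : guard' e xl = true
    · obtain ⟨hsc, hlen'⟩ := (Bool.and_eq_true _ _).mp hg
      have hlen : xl.length = e + 1 := of_decide_eq_true hlen'
      set xf : Fin (e + 1) → ℕ := fun i => xl.getD (i : ℕ) 0 with hxf
      have hxmono : StrictMono xf := fun i j hij =>
        strictChain_mono hsc (by exact_mod_cast hij) (by rw [hlen]; exact j.2)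
      set A : Finset ℕ := Finset.image xf Finset.univ with hA
      have hAcard : A.card = e + 1 := by
        rw [hA, Finset.card_image_of_injective _ hxmono.injective, Finset.card_univ,
          Fintype.card_fin]
      have hnotsh : ¬ Shatters C A := fun hsh =>
        absurd (card_le_of_shatters hd hsh) (by omega)
      rw [Shatters] at hnotsh
      push_neg at hnotsh
      obtain ⟨g, hg2⟩ := hnotsh
      set bl : List Bool := List.ofFn (fun i : Fin (e + 1) => g (xl.getD (i : ℕ) 0)) with hbl
      have hnb : ∀ h : Hyp, (∀ i < xl.length, h (xl.getD i 0) = bl.getD i false) → h ∉ C := by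
        intro h hmatch hhC
        obtain ⟨a, haA, hne⟩ := hg2 h hhC
        obtain ⟨i, _, rfl⟩ := Finset.mem_image.1 (hA ▸ haA)
        have h1 := hmatch (i : ℕ) (by rw [hlen]; exact i.2)
        rw [hbl, getD_ofFn _ i.2] at h1
        exact hne (by simpa [hxf] using h1)
      obtain ⟨s, hs⟩ := exists_stage hW hC xl bl hnb
      have hblmem : bl ∈ allLists (e + 1) := mem_allLists.2 (by simp [hbl])
      obtain ⟨j, hjlt, hjeq⟩ := List.mem_iff_getElem.1 hblmem
      have hgd : (allLists (e + 1)).getD j [] = bl := by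
        rw [List.getD_eq_getElem (l := allLists (e + 1)) (d := []) hjlt, hjeq]
      refine ⟨Nat.pair j s, (Bool.or_eq_true _ _).mpr (Or.inl ?_)⟩
      show checkCore (usTrace u (Nat.unpair (Nat.pair j s)).2) xl
        ((allLists (e + 1)).getD (Nat.unpair (Nat.pair j s)).1 [])
        (Nat.unpair (Nat.pair j s)).2 = true
      rw [Nat.unpair_pair]
      show checkCore (usTrace u s) xl ((allLists (e + 1)).getD j []) s = true
      rw [hgd]; exact hs
    · refine ⟨0, (Bool.or_eq_true _ _).mpr (Or.inr ?_)⟩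
      simp only [Bool.not_eq_true']
      exact Bool.eq_false_iff.mpr hg
  set F : List ℕ → ℕ := fun xl => Nat.find (Eall xl) with hFdef
  set f : (Fin (e + 1) → ℕ) → Fin (e + 1) → Bool := fun x i =>
    ((allLists (e + 1)).getD (Nat.unpair (F (List.ofFn x))).1 []).getD (i : ℕ) false with hfdef
  have hwit : IsWitness C e f := by
    intro x hx h hhC heq
    set xl := List.ofFn x with hxl
    have hlen : xl.length = e + 1 := by simp [hxl]
    have hguard : guard' e xl = true :=
      (Bool.and_eq_true _ _).mpr ⟨strictChain_ofFn hx, decide_eq_true hlen⟩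
    have hq := Nat.find_spec (Eall xl)
    have hmc : mainCheck u e xl (F xl) = true := by
      rcases (Bool.or_eq_true _ _).mp hq with h1 | h2
      · exact h1
      · rw [Bool.not_eq_true', hguard] at h2
        exact absurd h2 (by simp)
    have hmc' : checkCore (usTrace u (Nat.unpair (F xl)).2) xl
        ((allLists (e + 1)).getD (Nat.unpair (F xl)).1 [])
        (Nat.unpair (F xl)).2 = true := hmc
    refine sound hW hC hmc' hhC ?_
    intro i hi
    have hi' : i < e + 1 := by omega
    have h1 : xl.getD i 0 = x ⟨i, hi'⟩ := getD_ofFn x hi' 0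
    have h2 := congrFun heq ⟨i, hi'⟩
    rw [h1, ← h2]
  have hF : Computable F := by
    have hp : Partrec fun xl : List ℕ =>
        Nat.rfind fun n => (qfun u e xl n : Part Bool) :=
      Partrec.rfind ((computable_qfun hu e).partrec₂)
    refine hp.of_eq_tot fun xl => ?_
    apply Nat.mem_rfind.2
    constructor
    · exact Part.mem_some_iff.mpr (Nat.find_spec (Eall xl)).symm
    · intro m hm
      exact Part.mem_some_iff.mpr
        (Bool.eq_false_iff.mpr (Nat.find_min (Eall xl) hm)).symm
  have hofn : Computable fun x : Fin (e + 1) → ℕ => List.ofFn x := by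
    have : Primrec fun x : Fin (e + 1) → ℕ => List.ofFn fun i => x i :=
      Primrec.list_ofFn fun i => Primrec.fin_app.comp Primrec.id (Primrec.const i)
    exact this.to_comp
  have hbig : Computable fun x : Fin (e + 1) → ℕ =>
      (allLists (e + 1)).getD (Nat.unpair (F (List.ofFn x))).1 [] :=
    ((Primrec.list_getD ([] : List Bool)).to_comp).comp
      (Computable.const (allLists (e + 1)))
      (((Primrec.fst.comp Primrec.unpair).to_comp).comp (hF.comp hofn))
  have hout : Primrec fun bl : List Bool => (fun i : Fin (e + 1) => bl.getD (i : ℕ) false) := by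
    refine Primrec.fin_curry.2 ?_
    exact ((Primrec.list_getD false).comp Primrec.fst
      (Primrec.fin_val.comp Primrec.snd)).to₂
  exact ⟨f, hwit, ((hout.to_comp).comp hbig).of_eq fun x => rfl⟩

end CoCe

/-- For a co-c.e. closed class `C` (excluded prefixes enumerated by a computable
function) which is nonempty and of finite VC dimension `d`: for every `e ≥ d`
the class `C` admits a computable `e`-witness; in particular the effective VC
dimension of `C` equals `VCdim C`. -/
theorem co_ce_closed_computable_witness
    (u : ℕ → Option (List Bool)) (hu : Computable u)
    (W : Set (List Bool)) (hW : W = {w | ∃ n, u n = some w})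
    (C : Set Hyp) (hC : C = {h | ∀ w ∈ W, ¬ IsPrefixOf w h})
    (hne : C.Nonempty) (d : ℕ) (hd : VCdim C = (d : ℕ∞)) :
    (∀ e : ℕ, d ≤ e → ∃ f, IsWitness C e f ∧ Computable f) ∧
    (⨅ (k : ℕ) (_ : ∃ f, IsWitness C k f ∧ Computable f), (k : ℕ∞)) = VCdim C := by
  have hpart1 : ∀ e : ℕ, d ≤ e → ∃ f, IsWitness C e f ∧ Computable f :=
    fun e he => CoCe.exists_witness hu hW hC hd e he
  refine ⟨hpart1, ?_⟩
  rw [hd]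
  apply le_antisymm
  · exact iInf₂_le d (hpart1 d le_rfl)
  · refine le_iInf₂ fun k hk => ?_
    by_contra hlt
    push_neg at hlt
    have hkd : k < d := by exact_mod_cast hlt
    obtain ⟨f, hf, _⟩ := hk
    exact CoCe.no_witness hd hkd f hf
end

section
/- There exists a computable sequence (g_i)_{i∈ℕ} of hypotheses g_i : ℕ → Bool such that the concept class C given by the topological closure of {g_i : i ∈ ℕ} has VC dimension exactly 1, yet for no k ∈ ℕ does C admit a computable k-witness (i.e., C has infinite effective VC dimension). In particular, every witness function for C is non-computable. -/
namespace EVC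

open Nat.Partrec (Code)
open Nat.Partrec.Code

/-- The pattern (a list of booleans) produced by running code `m.unpair.2` on
input `m` for `s` steps, decoding the result as a `List Bool`. -/
def ePatt (m s : ℕ) : List Bool :=
  ((evaln s (Denumerable.ofNat Code m.unpair.2) m).bind
    fun r => (Encodable.decode r : Option (List Bool))).getD []

/-- The computable sequence of hypotheses. -/
def gfun (n x : ℕ) : Bool :=
  if n = 0 then decide (x = 0)
  else if x ≠ 0 ∧ (x - 1).unpair.1 = (n - 1).unpair.1 ∧
      (x - 1).unpair.2 ≤ ((n - 1).unpair.1).unpair.1 then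
    (ePatt ((n - 1).unpair.1) ((n - 1).unpair.2)).getD ((x - 1).unpair.2) false
  else false

theorem ePatt_primrec : Primrec₂ ePatt := by
  have h1 : Primrec₂ fun m s : ℕ => evaln s (Denumerable.ofNat Code m.unpair.2) m :=
    primrec_evaln.comp <|
      (Primrec.snd.pair ((Primrec.ofNat Code).comp
        (Primrec.snd.comp (Primrec.unpair.comp Primrec.fst)))).pair Primrec.fst
  have h2 : Primrec₂ fun m s : ℕ =>
      (evaln s (Denumerable.ofNat Code m.unpair.2) m).bind
        fun r => (Encodable.decode r : Option (List Bool)) :=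
    Primrec.option_bind h1 ((Primrec.decode.comp Primrec.snd).to₂)
  exact Primrec.option_getD.comp h2 (Primrec.const [])

theorem gfun_primrec : Primrec₂ gfun := by
  have hc1 : PrimrecPred fun p : ℕ × ℕ => p.1 = 0 :=
    Primrec.eq.comp Primrec.fst (Primrec.const 0)
  have hx1 : Primrec fun p : ℕ × ℕ => (p.2 - 1).unpair.1 :=
    Primrec.fst.comp (Primrec.unpair.comp (Primrec.pred.comp Primrec.snd))
  have hx2 : Primrec fun p : ℕ × ℕ => (p.2 - 1).unpair.2 :=
    Primrec.snd.comp (Primrec.unpair.comp (Primrec.pred.comp Primrec.snd))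
  have hn1 : Primrec fun p : ℕ × ℕ => (p.1 - 1).unpair.1 :=
    Primrec.fst.comp (Primrec.unpair.comp (Primrec.pred.comp Primrec.fst))
  have hn2 : Primrec fun p : ℕ × ℕ => (p.1 - 1).unpair.2 :=
    Primrec.snd.comp (Primrec.unpair.comp (Primrec.pred.comp Primrec.fst))
  have hcond : PrimrecPred fun p : ℕ × ℕ => p.2 ≠ 0 ∧ (p.2 - 1).unpair.1 = (p.1 - 1).unpair.1 ∧
      (p.2 - 1).unpair.2 ≤ ((p.1 - 1).unpair.1).unpair.1 :=
    ((Primrec.eq.comp Primrec.snd (Primrec.const 0)).not).and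
      ((Primrec.eq.comp hx1 hn1).and
        (Primrec.nat_le.comp hx2 (Primrec.fst.comp (Primrec.unpair.comp hn1))))
  have hthen : Primrec fun p : ℕ × ℕ =>
      (ePatt ((p.1 - 1).unpair.1) ((p.1 - 1).unpair.2)).getD ((p.2 - 1).unpair.2) false :=
    (Primrec.list_getD false).comp (ePatt_primrec.comp hn1 hn2) hx2
  have : Primrec fun p : ℕ × ℕ => gfun p.1 p.2 := by
    have := Primrec.ite hc1 (Primrec.eq.comp Primrec.snd (Primrec.const 0)).decide
      (Primrec.ite hcond hthen (Primrec.const false))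
    exact this.of_eq fun p => by simp [gfun, Nat.pred_eq_sub_one]
  exact this.to₂

theorem gfun_computable : Computable₂ gfun := gfun_primrec.to_comp

theorem gfun_zero (x : ℕ) : gfun 0 x = decide (x = 0) := by simp [gfun]

theorem gfun_succ (n x : ℕ) : gfun (n + 1) x =
    if x ≠ 0 ∧ (x - 1).unpair.1 = n.unpair.1 ∧ (x - 1).unpair.2 ≤ (n.unpair.1).unpair.1 then
      (ePatt (n.unpair.1) (n.unpair.2)).getD ((x - 1).unpair.2) false
    else false := by
  simp [gfun]

theorem gfun_apply_zero (n : ℕ) : gfun n 0 = decide (n = 0) := by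
  cases n with
  | zero => simp [gfun]
  | succ n => simp [gfun_succ]

theorem gfun_one (x : ℕ) : gfun 1 x = false := by
  rw [gfun_succ]
  split
  · simp [ePatt, evaln]
  · rfl

theorem gtrue {n x : ℕ} (h : gfun (n + 1) x = true) :
    x ≠ 0 ∧ (x - 1).unpair.1 = n.unpair.1 ∧ (x - 1).unpair.2 ≤ (n.unpair.1).unpair.1 ∧
      (ePatt (n.unpair.1) (n.unpair.2)).getD ((x - 1).unpair.2) false = true := by
  rw [gfun_succ] at h
  split at h
  · next hc => exact ⟨hc.1, hc.2.1, hc.2.2, h⟩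
  · exact absurd h (by simp)

theorem ePatt_det {m s₁ s₂ : ℕ} (h₁ : ePatt m s₁ ≠ []) (h₂ : ePatt m s₂ ≠ []) :
    ePatt m s₁ = ePatt m s₂ := by
  unfold ePatt at *
  cases he₁ : evaln s₁ (Denumerable.ofNat Code m.unpair.2) m with
  | none => rw [he₁] at h₁; simp at h₁
  | some r₁ =>
    cases he₂ : evaln s₂ (Denumerable.ofNat Code m.unpair.2) m with
    | none => rw [he₂] at h₂; simp at h₂
    | some r₂ =>
      have : r₁ = r₂ := by
        rcases le_total s₁ s₂ with hle | hle
        · have := evaln_mono hle (by rw [he₁]; rfl : r₁ ∈ evaln s₁ (Denumerable.ofNat Code m.unpair.2) m)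
          rw [Option.mem_def, he₂] at this
          exact (Option.some.inj this).symm
        · have := evaln_mono hle (by rw [he₂]; rfl : r₂ ∈ evaln s₂ (Denumerable.ofNat Code m.unpair.2) m)
          rw [Option.mem_def, he₁] at this
          exact Option.some.inj this
      rw [this]

/-- For any two distinct points, some pattern is never realized by the `gfun`s. -/
theorem pair_not_shattered {a b : ℕ} (hab : a ≠ b) :
    ∃ p q : Bool, ∀ n, ¬ (gfun n a = p ∧ gfun n b = q) := by
  have gz : ∀ x : ℕ, x ≠ 0 → gfun 0 x = false := by
    intro x hx; rw [gfun_zero]; simp [hx]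
  by_cases ha0 : a = 0
  · subst ha0
    refine ⟨true, true, fun n ⟨hna, hnb⟩ => ?_⟩
    rw [gfun_apply_zero] at hna
    have : n = 0 := by simpa using hna
    subst this
    rw [gz b (Ne.symm hab)] at hnb
    exact absurd hnb (by simp)
  · by_cases hb0 : b = 0
    · subst hb0
      refine ⟨true, true, fun n ⟨hna, hnb⟩ => ?_⟩
      rw [gfun_apply_zero] at hnb
      have : n = 0 := by simpa using hnb
      subst this
      rw [gz a ha0] at hna
      exact absurd hna (by simp)
    · by_cases hblk : (a - 1).unpair.1 = (b - 1).unpair.1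
      · -- same block
        by_cases H : ∃ n, gfun n a = true ∧ gfun n b = false
        · obtain ⟨n₁, h1a, h1b⟩ := H
          refine ⟨false, true, fun n₂ ⟨h2a, h2b⟩ => ?_⟩
          -- n₁ and n₂ are successors
          obtain ⟨n₁, rfl⟩ : ∃ m, n₁ = m + 1 := by
            cases n₁ with
            | zero => rw [gz a ha0] at h1a; exact absurd h1a (by simp)
            | succ m => exact ⟨m, rfl⟩
          obtain ⟨n₂, rfl⟩ : ∃ m, n₂ = m + 1 := by
            cases n₂ with
            | zero => rw [gz b hb0] at h2b; exact absurd h2b (by simp)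
            | succ m => exact ⟨m, rfl⟩
          obtain ⟨-, hm1, hi1, hg1⟩ := gtrue h1a
          obtain ⟨-, hm2, hi2, hg2⟩ := gtrue h2b
          -- blocks: n₁.unpair.1 = (a-1).unpair.1 = (b-1).unpair.1 = n₂.unpair.1
          have hmm : n₁.unpair.1 = n₂.unpair.1 := by rw [← hm1, hblk, hm2]
          have hne1 : ePatt (n₁.unpair.1) (n₁.unpair.2) ≠ [] := by
            intro he; rw [he] at hg1; exact absurd hg1 (by simp)
          have hne2 : ePatt (n₂.unpair.1) (n₂.unpair.2) ≠ [] := by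
            intro he; rw [he] at hg2; exact absurd hg2 (by simp)
          have hdet : ePatt (n₁.unpair.1) (n₁.unpair.2) = ePatt (n₂.unpair.1) (n₂.unpair.2) := by
            rw [hmm] at hne1 ⊢
            exact ePatt_det hne1 hne2
          -- now gfun (n₂+1) a = true, contradiction with h2a
          have : gfun (n₂ + 1) a = true := by
            rw [gfun_succ, if_pos ⟨ha0, by rw [← hmm, hm1], by rw [← hmm]; exact hi1⟩,
              ← hdet, hg1]
          rw [this] at h2a
          exact absurd h2a (by simp)
        · exact ⟨true, false, fun n hn => H ⟨n, hn⟩⟩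
      · -- different blocks: (true, true) never realized
        refine ⟨true, true, fun n ⟨hna, hnb⟩ => ?_⟩
        obtain ⟨n, rfl⟩ : ∃ m, n = m + 1 := by
          cases n with
          | zero => rw [gz a ha0] at hna; exact absurd hna (by simp)
          | succ m => exact ⟨m, rfl⟩
        obtain ⟨-, hm1, -, -⟩ := gtrue hna
        obtain ⟨-, hm2, -, -⟩ := gtrue hnb
        exact hblk (hm1.trans hm2.symm)

/-- Elements of the closure agree on finite sets with elements of the set. -/
theorem closure_agree {S : Set Hyp} {h : Hyp} (hh : h ∈ closure S) (A : Finset ℕ) :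
    ∃ h' ∈ S, ∀ x ∈ A, h' x = h x := by
  have hopen : IsOpen {u : Hyp | ∀ x ∈ A, u x = h x} := by
    have : {u : Hyp | ∀ x ∈ A, u x = h x} = ⋂ x ∈ A, (fun u : Hyp => u x) ⁻¹' {h x} := by
      ext u; simp
    rw [this]
    exact isOpen_biInter_finset fun x _ =>
      (continuous_apply x).isOpen_preimage _ (isOpen_discrete _)
  rcases mem_closure_iff.1 hh _ hopen (fun x _ => rfl) with ⟨h', hh', hS⟩
  exact ⟨h', hS, hh'⟩

theorem shattered_card_le {A : Finset ℕ}
    (hA : Shatters (closure (Set.range (fun n => gfun n))) A) : A.card ≤ 1 := by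
  by_contra hlt
  push_neg at hlt
  obtain ⟨a, ha, b, hb, hab⟩ := Finset.one_lt_card.1 hlt
  obtain ⟨p, q, hpq⟩ := pair_not_shattered hab
  obtain ⟨h, hmem, hagree⟩ := hA (fun x => if x = a then p else q)
  obtain ⟨h', ⟨n, rfl⟩, hagree'⟩ := closure_agree hmem {a, b}
  refine hpq n ⟨?_, ?_⟩
  · have h1 := hagree' a (by simp)
    rw [hagree a ha] at h1
    simpa using h1
  · have h2 := hagree' b (by simp)
    rw [hagree b hb] at h2
    simpa [Ne.symm hab] using h2

theorem shatters_zero : Shatters (closure (Set.range (fun n => gfun n))) {0} := by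
  intro g'
  cases hg : g' 0 with
  | true =>
    refine ⟨gfun 0, subset_closure ⟨0, rfl⟩, fun x hx => ?_⟩
    simp only [Finset.mem_singleton] at hx
    subst hx; rw [hg, gfun_zero]; simp
  | false =>
    refine ⟨gfun 1, subset_closure ⟨1, rfl⟩, fun x hx => ?_⟩
    simp only [Finset.mem_singleton] at hx
    subst hx; rw [hg, gfun_one]

theorem vcdim_eq_one : VCdim (closure (Set.range (fun n => gfun n))) = 1 := by
  apply le_antisymm
  · refine iSup₂_le fun A hA => ?_
    exact_mod_cast Nat.cast_le_one.2 (shattered_card_le hA)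
  · refine le_iSup₂_of_le {0} shatters_zero ?_
    simp

/-- The block tuple for parameters `k`, `m`. -/
def tup (k m : ℕ) : Fin (k + 1) → ℕ := fun i => Nat.pair m i + 1

theorem tup_strictMono (k m : ℕ) : StrictMono (tup k m) := by
  intro i j hij
  exact Nat.succ_lt_succ (Nat.pair_lt_pair_right m (by exact_mod_cast hij))

theorem no_computable_witness (k : ℕ) :
    ¬ ∃ f, IsWitness (closure (Set.range (fun n => gfun n))) k f ∧ Computable f := by
  rintro ⟨f, hW, hC⟩
  -- the list-valued version of f on block tuples
  set F : ℕ → List Bool := fun m => List.ofFn fun i => f (tup k m) i with hFdef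
  have htup : Computable (tup k) := by
    have : Primrec (tup k) := Primrec.fin_curry.2 <|
      Primrec.succ.comp (Primrec₂.natPair.comp Primrec.fst
        (Primrec.fin_val.comp Primrec.snd)) |>.to₂
    exact this.to_comp
  have hF : Computable F :=
    Computable.list_ofFn fun i =>
      Computable.fin_app.comp (hC.comp htup) (Computable.const i)
  obtain ⟨c, hc⟩ := exists_code.1 hF
  set m := Nat.pair k (Encodable.encode c) with hm
  have heval : Encodable.encode (F m) ∈ eval c m := by
    rw [hc]
    simp [Encodable.decode_nat]
  obtain ⟨s, hs⟩ := evaln_complete.1 heval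
  have hs' : evaln s c m = some (Encodable.encode (F m)) := hs
  have hPatt : ePatt m s = F m := by
    unfold ePatt
    rw [hm, Nat.unpair_pair]
    simp only [← hm]
    rw [Denumerable.ofNat_encode, hs']
    simp [Encodable.encodek]
  set n := Nat.pair m s with hn
  have hk : m.unpair.1 = k := by rw [hm, Nat.unpair_pair]
  have hgv : ∀ i : Fin (k + 1), gfun (n + 1) (tup k m i) = f (tup k m) i := by
    intro i
    have hx : tup k m i - 1 = Nat.pair m i := rfl
    have hc1 : (tup k m i - 1).unpair.1 = m := by rw [hx, Nat.unpair_pair]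
    have hc2 : (tup k m i - 1).unpair.2 = (i : ℕ) := by rw [hx, Nat.unpair_pair]
    have hn1 : (n : ℕ).unpair.1 = m := by rw [hn, Nat.unpair_pair]
    have hn2 : (n : ℕ).unpair.2 = s := by rw [hn, Nat.unpair_pair]
    rw [gfun_succ, hc1, hc2, hn1, hn2,
      if_pos ⟨Nat.succ_ne_zero _, rfl, by rw [hk]; exact Nat.lt_succ_iff.1 i.isLt⟩, hPatt]
    simp only [hFdef]
    have hlen : (i : ℕ) < (List.ofFn fun j => f (tup k m) j).length := by simp [i.isLt]
    rw [List.getD_eq_getElem _ _ hlen, List.getElem_ofFn]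
  have := hW (tup k m) (tup_strictMono k m) (gfun (n + 1)) (subset_closure ⟨n + 1, rfl⟩)
  exact this (funext fun i => (hgv i).symm)

end EVC

/-- There is a computable sequence `(gᵢ)` of hypotheses whose closure `C` has
VC dimension exactly `1`, yet `C` admits no computable `k`-witness for any `k`
(`C` has infinite effective VC dimension); in particular every witness function
for `C` is non-computable. -/
theorem exists_ce_closed_class_infinite_effective_vcdim :
    ∃ g : ℕ → ℕ → Bool, Computable₂ g ∧
      VCdim (closure (Set.range g)) = (1 : ℕ∞) ∧
      (∀ k : ℕ, ¬ ∃ f, IsWitness (closure (Set.range g)) k f ∧ Computable f) ∧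
      (∀ k : ℕ, ∀ f, IsWitness (closure (Set.range g)) k f → ¬ Computable f) := by
  refine ⟨EVC.gfun, EVC.gfun_computable, EVC.vcdim_eq_one, EVC.no_computable_witness,
    fun k f hW hC => EVC.no_computable_witness k ⟨f, hW, hC⟩⟩
end

section
/- There exists a computable sequence (g_i)_{i∈ℕ} of hypotheses g_i : ℕ → Bool such that the concept class C given by the topological closure of {g_i : i ∈ ℕ} has VC dimension 1 and such that for every empirical risk minimizer A for C, the halting problem K := {e ∈ ℕ : the e-th partial computable function halts on input e} is many-one reducible to the set {(S,n) : A(S)(n) = true} (under a standard coding of samples and numbers); in particular, no empirical risk minimizer for C is computable. -/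
/-- The empirical risk `L_S(h) = |{i : h xᵢ ≠ yᵢ}| / |S|`. -/
noncomputable def empRisk (S : Sample) (h : Hyp) : ℝ :=
  ((S.countP fun p => h p.1 != p.2 : ℕ) : ℝ) / (S.length : ℝ)

/-- `A` is an empirical risk minimizer for `C`: on every sample of size `≥ 1`
it outputs a hypothesis in `C` of minimal empirical risk within `C`. -/
def IsERM (C : Set Hyp) (A : Learner) : Prop :=
  ∀ S : Sample, 1 ≤ S.length →
    A S ∈ C ∧ ∀ h ∈ C, empRisk S (A S) ≤ empRisk S h

/-- The halting problem `K = {e : the e-th partial computable function halts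
on input e}`. -/
def HaltingK : ℕ → Prop :=
  fun e => ((Denumerable.ofNat Nat.Partrec.Code e).eval e).Dom

open Nat.Partrec (Code) in
open Nat.Partrec.Code in
/-- The computable sequence of hypotheses. -/
def gseq (i n : ℕ) : Bool :=
  (evaln i.unpair.2 (Denumerable.ofNat Code i.unpair.1) i.unpair.1).isSome
    && (n == i.unpair.1)

lemma gseq_zero : gseq 0 = fun _ => false := by
  funext n; simp [gseq, Nat.Partrec.Code.evaln]

lemma gseq_eq_true {i n : ℕ} (h : gseq i n = true) :
    HaltingK n ∧ gseq i = fun m => (m == n) := by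
  rw [gseq, Bool.and_eq_true, beq_iff_eq] at h
  obtain ⟨hs, rfl⟩ := h
  obtain ⟨x, hx⟩ := Option.isSome_iff_exists.1 hs
  refine ⟨Part.dom_iff_mem.2 ⟨x, Nat.Partrec.Code.evaln_sound hx⟩, ?_⟩
  funext m
  simp [gseq, hs]

lemma gseq_mem_chi {e : ℕ} (he : HaltingK e) :
    (fun m => (m == e : Bool)) ∈ Set.range gseq := by
  obtain ⟨x, hx⟩ := Part.dom_iff_mem.1 he
  obtain ⟨k, hk⟩ := Nat.Partrec.Code.evaln_complete.1 hx
  have hs : (Nat.Partrec.Code.evaln k (Denumerable.ofNat Nat.Partrec.Code e) e).isSome = true :=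
    Option.isSome_iff_exists.2 ⟨x, hk⟩
  refine ⟨Nat.pair e k, ?_⟩
  funext m
  simp [gseq, Nat.unpair_pair, hs]

lemma range_gseq_closed : closure (Set.range gseq) = Set.range gseq := by
  refine Set.Subset.antisymm (fun h hcl => ?_) subset_closure
  by_cases h0 : h = fun _ => false
  · exact ⟨0, (h0.trans gseq_zero.symm).symm⟩
  · have : ∃ e, h e = true := by
      by_contra hc
      push_neg at hc
      exact h0 (funext fun n => by simpa using hc n)
    obtain ⟨e, he⟩ := this
    -- h is true only at e
    have honly : ∀ a, a ≠ e → h a = false := by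
      intro a ha
      by_contra hfa
      have hfa : h a = true := by simpa using hfa
      have hU : IsOpen {f : Hyp | f e = true ∧ f a = true} := by
        have h1 := (isOpen_discrete ({true} : Set Bool)).preimage (continuous_apply (A := fun _ : ℕ => Bool) e)
        have h2 := (isOpen_discrete ({true} : Set Bool)).preimage (continuous_apply (A := fun _ : ℕ => Bool) a)
        exact (h1.inter h2)
      obtain ⟨f, ⟨hfe, hfa'⟩, i, rfl⟩ :=
        (mem_closure_iff.1 hcl _ hU ⟨he, hfa⟩)
      have h1 := (gseq_eq_true hfe).2
      have := congrFun h1 a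
      rw [hfa'] at this
      exact ha (by simpa using this.symm)
    have hU : IsOpen {f : Hyp | f e = true} :=
      (isOpen_discrete ({true} : Set Bool)).preimage (continuous_apply (A := fun _ : ℕ => Bool) e)
    obtain ⟨f, hfe, i, rfl⟩ := (mem_closure_iff.1 hcl _ hU he)
    obtain ⟨hK, _⟩ := gseq_eq_true hfe
    have : h = fun m => (m == e : Bool) := by
      funext m
      by_cases hm : m = e
      · subst hm; simpa using he
      · rw [honly m hm]; simp [hm]
    rw [this]
    exact gseq_mem_chi hK

lemma gseq_mem_zero : (fun _ => false : Hyp) ∈ Set.range gseq :=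
  ⟨0, gseq_zero⟩

lemma haltingK_encode_zero : HaltingK (Encodable.encode Nat.Partrec.Code.zero) := by
  unfold HaltingK
  rw [Denumerable.ofNat_encode]
  simp only [Nat.Partrec.Code.eval]
  exact trivial

lemma vcdim_gseq : VCdim (closure (Set.range gseq)) = 1 := by
  apply le_antisymm
  · refine iSup₂_le fun A hA => ?_
    by_contra hlt
    push_neg at hlt
    have h2 : 1 < A.card := by exact_mod_cast hlt
    obtain ⟨a, ha, b, hb, hab⟩ := Finset.one_lt_card.1 h2
    obtain ⟨h, hC, hh⟩ := hA (fun _ => true)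
    rw [range_gseq_closed] at hC
    obtain ⟨i, rfl⟩ := hC
    have h1 := (gseq_eq_true (hh a ha)).2
    have h3 := congrFun h1 b
    rw [hh b hb] at h3
    have hba : b = a := by simpa using h3
    exact hab hba.symm
  · set e₀ := Encodable.encode Nat.Partrec.Code.zero with he₀
    have hsh : Shatters (closure (Set.range gseq)) {e₀} := by
      intro gt
      by_cases hte : gt e₀ = true
      · refine ⟨fun m => (m == e₀), subset_closure (gseq_mem_chi haltingK_encode_zero), ?_⟩
        intro x hx
        simp only [Finset.mem_singleton] at hx
        subst hx
        simp [hte]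
      · refine ⟨fun _ => false, subset_closure gseq_mem_zero, ?_⟩
        intro x hx
        simp only [Finset.mem_singleton] at hx
        subst hx
        simp [Bool.not_eq_true] at hte
        rw [hte]
    have hle : (({e₀} : Finset ℕ).card : ℕ∞) ≤ VCdim (closure (Set.range gseq)) := by
      rw [VCdim]
      exact le_iSup₂ (f := fun (A : Finset ℕ)
        (_ : Shatters (closure (Set.range gseq)) A) => (A.card : ℕ∞)) {e₀} hsh
    simpa using hle

lemma erm_key {A : Learner} (hA : IsERM (closure (Set.range gseq)) A) (e : ℕ) :
    HaltingK e ↔ A [(e, true)] e = true := by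
  obtain ⟨hmem, hmin⟩ := hA [(e, true)] (by simp)
  constructor
  · intro he
    by_contra hf
    rw [Bool.not_eq_true] at hf
    have h1 : empRisk [(e, true)] (A [(e, true)]) ≤
        empRisk [(e, true)] (fun m => (m == e)) :=
      hmin _ (subset_closure (gseq_mem_chi he))
    simp [empRisk, hf] at h1
    norm_num at h1
  · intro ht
    by_contra he
    rw [range_gseq_closed] at hmem
    obtain ⟨i, hi⟩ := hmem
    have : gseq i e = true := by rw [hi]; exact ht
    exact he (gseq_eq_true this).1

lemma gseq_computable : Computable₂ gseq := by
  have u1 : Primrec (fun i : ℕ => i.unpair.1) := Primrec.fst.comp Primrec.unpair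
  have u2 : Primrec (fun i : ℕ => i.unpair.2) := Primrec.snd.comp Primrec.unpair
  have hev : Primrec (fun i : ℕ =>
      (Nat.Partrec.Code.evaln i.unpair.2
        (Denumerable.ofNat Nat.Partrec.Code i.unpair.1) i.unpair.1).isSome) :=
    Primrec.option_isSome.comp
      (Nat.Partrec.Code.primrec_evaln.comp
        ((u2.pair ((Primrec.ofNat _).comp u1)).pair u1))
  have hbeq : Primrec (fun p : ℕ × ℕ => (p.2 == p.1.unpair.1 : Bool)) := by
    have := Primrec.beq.comp (Primrec.snd (α := ℕ) (β := ℕ)) (u1.comp Primrec.fst)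
    exact this.of_eq fun p => by by_cases h : p.2 = p.1.unpair.1 <;> simp [h]
  have hp : Primrec₂ gseq := by
    have := Primrec.cond (hev.comp (Primrec.fst (α := ℕ) (β := ℕ))) hbeq
      (Primrec.const false)
    exact this.of_eq fun p => by
      rw [gseq]
      cases (Nat.Partrec.Code.evaln p.1.unpair.2
        (Denumerable.ofNat Nat.Partrec.Code p.1.unpair.1) p.1.unpair.1).isSome <;> simp
  exact hp.to_comp

lemma haltingK_not_computablePred : ¬ ComputablePred HaltingK := by
  intro hK
  apply ComputablePred.halting_problem 0
  have hred : (fun c : Nat.Partrec.Code => (c.eval 0).Dom) ≤₀ HaltingK := by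
    refine ⟨fun c => Encodable.encode (c.comp (Nat.Partrec.Code.const 0)), ?_, ?_⟩
    · exact (Primrec.encode.comp
        (Nat.Partrec.Code.primrec₂_comp.comp Primrec.id
          (Primrec.const (Nat.Partrec.Code.const 0)))).to_comp
    · intro c
      unfold HaltingK
      rw [Denumerable.ofNat_encode]
      simp only [Nat.Partrec.Code.eval, Nat.Partrec.Code.eval_const, Part.bind_eq_bind,
        Part.bind_dom]
      exact ⟨fun h => ⟨trivial, h⟩, fun h => h.2⟩
  exact ComputablePred.computable_of_manyOneReducible hred hK

/-- There is a computable sequence `(gᵢ)` of hypotheses whose closure `C` has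
VC dimension `1` such that for every empirical risk minimizer `A` for `C`, the
halting problem is many-one reducible to `{(S,n) : A S n = true}`; in
particular no empirical risk minimizer for `C` is computable. -/
theorem exists_ce_closed_class_erm_computes_halting :
    ∃ g : ℕ → ℕ → Bool, Computable₂ g ∧
      VCdim (closure (Set.range g)) = (1 : ℕ∞) ∧
      ∀ A : Learner, IsERM (closure (Set.range g)) A →
        ManyOneReducible HaltingK (fun q : Sample × ℕ => A q.1 q.2 = true) ∧
        ¬ Computable (fun q : Sample × ℕ => A q.1 q.2) := by
  refine ⟨gseq, gseq_computable, vcdim_gseq, fun A hA => ?_⟩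
  have hred : ManyOneReducible HaltingK (fun q : Sample × ℕ => A q.1 q.2 = true) := by
    refine ⟨fun e => ([(e, true)], e), ?_, fun e => by simpa using erm_key hA e⟩
    exact ((Primrec.list_cons.comp (Primrec.pair Primrec.id (Primrec.const true))
      (Primrec.const [])).pair Primrec.id).to_comp
  refine ⟨hred, fun hc => ?_⟩
  have hCP : ComputablePred (fun q : Sample × ℕ => A q.1 q.2 = true) := by
    refine ⟨fun q => Bool.decEq _ _, ?_⟩
    exact hc.of_eq fun q => by cases h : A q.1 q.2 <;> simp [h]
  exact haltingK_not_computablePred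
    (ComputablePred.computable_of_manyOneReducible hred hCP)
end
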